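/- arXiv:0905.1890 — 12 statements merged into one kernel-verified Lean document; each statement's English description precedes it below -/
import Mathlib

section
/- Let L be a Lie algebra, α : L → L a Lie algebra morphism, and r ∈ L⊗L a solution of the classical Yang-Baxter equation. Then for each integer n ≥ 0, the element (α⊗α)^n(r) is a solution of the classical Hom-Yang-Baxter equation in the Hom-Lie algebra L_α = (L, α∘[-,-], α). -/
open TensorProduct

variable {k : Type*} [Field k]
variable {L : Type*} [AddCommGroup L] [Module k L]

/-- `[r₁₂, s₁₃]` -/
noncomputable def c1213 (β : L →ₗ[k] L →ₗ[k] L) (α : L →ₗ[k] L) :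
    (L ⊗[k] L) ⊗[k] (L ⊗[k] L) →ₗ[k] L ⊗[k] (L ⊗[k] L) :=
  (TensorProduct.map (TensorProduct.lift β) (TensorProduct.map α α)) ∘ₗ
    (TensorProduct.tensorTensorTensorComm k L L L L).toLinearMap

/-- `[r₁₂, s₂₃]` -/
noncomputable def c1223 (β : L →ₗ[k] L →ₗ[k] L) (α : L →ₗ[k] L) :
    (L ⊗[k] L) ⊗[k] (L ⊗[k] L) →ₗ[k] L ⊗[k] (L ⊗[k] L) :=
  (TensorProduct.map α ((TensorProduct.map (TensorProduct.lift β) α) ∘ₗ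
      (TensorProduct.assoc k L L L).symm.toLinearMap)) ∘ₗ
    (TensorProduct.assoc k L L (L ⊗[k] L)).toLinearMap

/-- `[r₁₃, s₂₃]` -/
noncomputable def c1323 (β : L →ₗ[k] L →ₗ[k] L) (α : L →ₗ[k] L) :
    (L ⊗[k] L) ⊗[k] (L ⊗[k] L) →ₗ[k] L ⊗[k] (L ⊗[k] L) :=
  (TensorProduct.assoc k L L L).toLinearMap ∘ₗ
    (TensorProduct.map (TensorProduct.map α α) (TensorProduct.lift β)) ∘ₗ
    (TensorProduct.tensorTensorTensorComm k L L L L).toLinearMap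

/-- `[[r,s]]^α = [r₁₂,s₁₃] + [r₁₂,s₂₃] + [r₁₃,s₂₃]` -/
noncomputable def chybe (β : L →ₗ[k] L →ₗ[k] L) (α : L →ₗ[k] L) (r s : L ⊗[k] L) :
    L ⊗[k] (L ⊗[k] L) :=
  c1213 β α (r ⊗ₜ s) + c1223 β α (r ⊗ₜ s) + c1323 β α (r ⊗ₜ s)

/-- `ad_x` on `L ⊗ L`. -/
noncomputable def adT2 (β : L →ₗ[k] L →ₗ[k] L) (α : L →ₗ[k] L) (x : L) :
    L ⊗[k] L →ₗ[k] L ⊗[k] L :=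
  TensorProduct.map (β x) α + TensorProduct.map α (β x)

/-- `ad_x` on `L ⊗ L ⊗ L`. -/
noncomputable def adT3 (β : L →ₗ[k] L →ₗ[k] L) (α : L →ₗ[k] L) (x : L) :
    L ⊗[k] (L ⊗[k] L) →ₗ[k] L ⊗[k] (L ⊗[k] L) :=
  TensorProduct.map (β x) (TensorProduct.map α α) +
    TensorProduct.map α (TensorProduct.map (β x) α) +
    TensorProduct.map α (TensorProduct.map α (β x))

/-- the cyclic permutation on `L ⊗ L ⊗ L`, `x⊗y⊗z ↦ z⊗x⊗y`. -/
noncomputable def cyc : L ⊗[k] (L ⊗[k] L) →ₗ[k] L ⊗[k] (L ⊗[k] L) :=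
  (TensorProduct.comm k (L ⊗[k] L) L).toLinearMap ∘ₗ
    (TensorProduct.assoc k L L L).symm.toLinearMap

/-- the cyclic sum `↻` on `L ⊗ L ⊗ L`. -/
noncomputable def cycSum : L ⊗[k] (L ⊗[k] L) →ₗ[k] L ⊗[k] (L ⊗[k] L) :=
  LinearMap.id + cyc + cyc ∘ₗ cyc

/-- `Δ = ad(r) : x ↦ ad_x(r)` as a linear map. -/
noncomputable def adr (β : L →ₗ[k] L →ₗ[k] L) (α : L →ₗ[k] L) (r : L ⊗[k] L) :
    L →ₗ[k] L ⊗[k] L where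
  toFun x := adT2 β α x r
  map_add' x y := by
    simp only [adT2, map_add, TensorProduct.map_add_left, TensorProduct.map_add_right,
      LinearMap.add_apply]
    abel
  map_smul' c x := by
    simp only [adT2, map_smul, TensorProduct.map_smul_left, TensorProduct.map_smul_right,
      LinearMap.add_apply, LinearMap.smul_apply, RingHom.id_apply, smul_add]

/-- Hom-Lie algebra axioms. -/
def IsHomLie (β : L →ₗ[k] L →ₗ[k] L) (α : L →ₗ[k] L) : Prop :=
  (∀ x y, β x y = - β y x) ∧
  (∀ x y, α (β x y) = β (α x) (α y)) ∧
  (∀ x y z, β (β x y) (α z) + β (β z x) (α y) + β (β y z) (α x) = 0)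

/-- Hom-Lie coalgebra axioms. -/
def IsHomLieCoalg (Δ : L →ₗ[k] L ⊗[k] L) (α : L →ₗ[k] L) : Prop :=
  (∀ x, Δ (α x) = TensorProduct.map α α (Δ x)) ∧
  (∀ x, TensorProduct.comm k L L (Δ x) = - Δ x) ∧
  (∀ x, cycSum (TensorProduct.map α Δ (Δ x)) = 0)

/-- Hom-Lie bialgebra axioms. -/
def IsHomLieBialg (β : L →ₗ[k] L →ₗ[k] L) (Δ : L →ₗ[k] L ⊗[k] L) (α : L →ₗ[k] L) : Prop :=
  IsHomLie β α ∧ IsHomLieCoalg Δ α ∧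
  (∀ x y, Δ (β x y) = adT2 β α (α x) (Δ y) - adT2 β α (α y) (Δ x))

lemma c1213_tmul (β : L →ₗ[k] L →ₗ[k] L) (α : L →ₗ[k] L) (a b c d : L) :
    c1213 β α ((a ⊗ₜ b) ⊗ₜ (c ⊗ₜ d)) = β a c ⊗ₜ (α b ⊗ₜ α d) := by
  simp [c1213, tensorTensorTensorComm_tmul]

lemma c1223_tmul (β : L →ₗ[k] L →ₗ[k] L) (α : L →ₗ[k] L) (a b c d : L) :
    c1223 β α ((a ⊗ₜ b) ⊗ₜ (c ⊗ₜ d)) = α a ⊗ₜ (β b c ⊗ₜ α d) := by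
  simp [c1223]

lemma c1323_tmul (β : L →ₗ[k] L →ₗ[k] L) (α : L →ₗ[k] L) (a b c d : L) :
    c1323 β α ((a ⊗ₜ b) ⊗ₜ (c ⊗ₜ d)) = α a ⊗ₜ (α c ⊗ₜ β b d) := by
  simp [c1323, tensorTensorTensorComm_tmul]

section Lie
variable {k : Type*} [Field k] {L : Type*} [LieRing L] [LieAlgebra k L]
  (α : L →ₗ[k] L) (hα : ∀ x y : L, α ⁅x, y⁆ = ⁅α x, α y⁆)

local notation "ad" => LieAlgebra.ad k L
local notation "T3" => TensorProduct.map α (TensorProduct.map α α)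
local notation "A" => TensorProduct.map α α

lemma twist1213 : c1213 (LinearMap.compr₂ ad α) α =
    T3 ∘ₗ c1213 ad (LinearMap.id : L →ₗ[k] L) := by
  ext a b c d
  simp [c1213_tmul]

lemma twist1223 : c1223 (LinearMap.compr₂ ad α) α =
    T3 ∘ₗ c1223 ad (LinearMap.id : L →ₗ[k] L) := by
  ext a b c d
  simp [c1223_tmul]

lemma twist1323 : c1323 (LinearMap.compr₂ ad α) α =
    T3 ∘ₗ c1323 ad (LinearMap.id : L →ₗ[k] L) := by
  ext a b c d
  simp [c1323_tmul]

include hα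

lemma comm1213 : c1213 ad (LinearMap.id : L →ₗ[k] L) ∘ₗ TensorProduct.map A A =
    T3 ∘ₗ c1213 ad (LinearMap.id : L →ₗ[k] L) := by
  ext a b c d
  simp [c1213_tmul, hα]

lemma comm1223 : c1223 ad (LinearMap.id : L →ₗ[k] L) ∘ₗ TensorProduct.map A A =
    T3 ∘ₗ c1223 ad (LinearMap.id : L →ₗ[k] L) := by
  ext a b c d
  simp [c1223_tmul, hα]

lemma comm1323 : c1323 ad (LinearMap.id : L →ₗ[k] L) ∘ₗ TensorProduct.map A A =
    T3 ∘ₗ c1323 ad (LinearMap.id : L →ₗ[k] L) := by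
  ext a b c d
  simp [c1323_tmul, hα]

lemma chybe_map (r s : L ⊗[k] L) :
    chybe ad (LinearMap.id : L →ₗ[k] L) (A r) (A s) =
      T3 (chybe ad (LinearMap.id : L →ₗ[k] L) r s) := by
  have h : (A r) ⊗ₜ[k] (A s) = TensorProduct.map A A (r ⊗ₜ s) := rfl
  rw [chybe, chybe, h, ← LinearMap.comp_apply, ← LinearMap.comp_apply, ← LinearMap.comp_apply,
    comm1213 α hα, comm1223 α hα, comm1323 α hα]
  simp

end Lie

/-- a classical r-matrix and a Lie algebra endomorphism `α` induce
solutions `(α⊗α)^n(r)` of the CHYBE in the twisted Hom-Lie algebra `L_α`. -/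
theorem stmt1 {k : Type*} [Field k] [CharZero k] {L : Type*} [LieRing L] [LieAlgebra k L]
    (α : L →ₗ[k] L) (hα : ∀ x y : L, α ⁅x, y⁆ = ⁅α x, α y⁆)
    (r : L ⊗[k] L)
    (hr : chybe (LieAlgebra.ad k L) (LinearMap.id : L →ₗ[k] L) r r = 0) :
    ∀ n : ℕ,
      chybe (LinearMap.compr₂ (LieAlgebra.ad k L) α) α
        ((TensorProduct.map α α ^ n) r) ((TensorProduct.map α α ^ n) r) = 0 := by
  have key : ∀ n : ℕ, chybe (LieAlgebra.ad k L) (LinearMap.id : L →ₗ[k] L)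
      ((TensorProduct.map α α ^ n) r) ((TensorProduct.map α α ^ n) r) = 0 := by
    intro n
    induction n with
    | zero => simpa using hr
    | succ n ih =>
      have hp : (TensorProduct.map α α ^ (n+1)) r =
          TensorProduct.map α α ((TensorProduct.map α α ^ n) r) := by
        rw [pow_succ']; rfl
      rw [hp, chybe_map α hα, ih, map_zero]
  intro n
  have := key n
  simp only [chybe, ← LinearMap.comp_apply, twist1213 α, twist1223 α, twist1323 α,
    LinearMap.comp_apply] at *
  rw [← map_add, ← map_add, this, map_zero]
end

section
/- In the Hom-Lie algebra L_α obtained from a Lie algebra L twisted by a Lie algebra endomorphism α, and for r a classical r-matrix in L and any n ≥ 0, one has [[(α⊗α)^n(r), (α⊗α)^n(r)]]^α = α^{n+1}⊗α^{n+1}⊗α^{n+1} applied to [[r,r]]^{Id}, where [[-,-]]^{Id} denotes the CYBE expression in L. -/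
open TensorProduct

variable {k : Type*} [Field k]
variable {L : Type*} [AddCommGroup L] [Module k L]

/-- `[[(α⊗α)ⁿ(r), (α⊗α)ⁿ(r)]]^α = (α^{n+1}⊗α^{n+1}⊗α^{n+1})([[r,r]]^Id)`. -/
theorem stmt2 {k : Type*} [Field k] [CharZero k] {L : Type*} [LieRing L] [LieAlgebra k L]
    (α : L →ₗ[k] L) (hα : ∀ x y : L, α ⁅x, y⁆ = ⁅α x, α y⁆)
    (r : L ⊗[k] L) (n : ℕ) :
    chybe (LinearMap.compr₂ (LieAlgebra.ad k L) α) α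
        ((TensorProduct.map α α ^ n) r) ((TensorProduct.map α α ^ n) r)
      = TensorProduct.map (α ^ (n + 1))
          (TensorProduct.map (α ^ (n + 1)) (α ^ (n + 1)))
          (chybe (LieAlgebra.ad k L) (LinearMap.id : L →ₗ[k] L) r r) := by
  have hpow : ∀ (m : ℕ) (x y : L), (α ^ m) ⁅x, y⁆ = ⁅(α ^ m) x, (α ^ m) y⁆ := by
    intro m
    induction m with
    | zero => intro x y; simp
    | succ m ih =>
      intro x y
      simp only [pow_succ, Module.End.mul_apply, hα, ih]
  have key : (c1213 (LinearMap.compr₂ (LieAlgebra.ad k L) α) α +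
        c1223 (LinearMap.compr₂ (LieAlgebra.ad k L) α) α +
        c1323 (LinearMap.compr₂ (LieAlgebra.ad k L) α) α) ∘ₗ
      TensorProduct.map (TensorProduct.map α α ^ n) (TensorProduct.map α α ^ n)
    = TensorProduct.map (α ^ (n + 1)) (TensorProduct.map (α ^ (n + 1)) (α ^ (n + 1))) ∘ₗ
      (c1213 (LieAlgebra.ad k L) LinearMap.id + c1223 (LieAlgebra.ad k L) LinearMap.id +
       c1323 (LieAlgebra.ad k L) LinearMap.id) := by
    rw [TensorProduct.map_pow]
    apply TensorProduct.ext_fourfold'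
    intro a b c d
    simp only [LinearMap.comp_apply, LinearMap.add_apply, TensorProduct.map_tmul,
      c1213, c1223, c1323, LinearEquiv.coe_coe,
      TensorProduct.tensorTensorTensorComm_tmul, TensorProduct.assoc_tmul,
      TensorProduct.assoc_symm_tmul, TensorProduct.lift.tmul,
      LinearMap.compr₂_apply, LieHom.coe_toLinearMap, LieAlgebra.ad_apply, map_add, LinearMap.id_coe, id_eq,
      TensorProduct.tmul_add, TensorProduct.add_tmul, ← hpow,
      pow_succ', Module.End.mul_apply]
  have h := LinearMap.congr_fun key (r ⊗ₜ[k] r)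
  simpa only [chybe, LinearMap.comp_apply, LinearMap.add_apply, TensorProduct.map_tmul,
    map_add] using h
end

section
/- A non-zero linear map α : sl(2,ℂ) → sl(2,ℂ) is a Lie bialgebra morphism (commuting with both the bracket and the standard cobracket) if and only if α(H) = H, α(X₊) = b·X₊, and α(X₋) = b⁻¹·X₋ for some non-zero complex number b. -/
open TensorProduct

variable {k : Type*} [Field k]
variable {L : Type*} [AddCommGroup L] [Module k L]

/-! ### `sl(2,ℂ)` realized on `Fin 3 → ℂ` with basis `H = e₀`, `X₊ = e₁`, `X₋ = e₂`. -/

/-- `H`. -/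
noncomputable def slH : Fin 3 → ℂ := Pi.single 0 1
/-- `X₊`. -/
noncomputable def slXp : Fin 3 → ℂ := Pi.single 1 1
/-- `X₋`. -/
noncomputable def slXm : Fin 3 → ℂ := Pi.single 2 1

/-- the `sl(2)` bracket: `[X₊,X₋] = H`, `[H,X₊] = 2X₊`, `[H,X₋] = -2X₋`-/
noncomputable def slBr : (Fin 3 → ℂ) →ₗ[ℂ] (Fin 3 → ℂ) →ₗ[ℂ] (Fin 3 → ℂ) :=
  LinearMap.mk₂ ℂ
    (fun u v => ![u 1 * v 2 - u 2 * v 1, 2 * (u 0 * v 1 - u 1 * v 0),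
      -2 * (u 0 * v 2 - u 2 * v 0)])
    (by intro u u' v; funext i; fin_cases i <;> simp <;> ring)
    (by intro c u v; funext i; fin_cases i <;> simp <;> ring)
    (by intro u v v'; funext i; fin_cases i <;> simp <;> ring)
    (by intro c u v; funext i; fin_cases i <;> simp <;> ring)

/-- the standard cobracket of `sl(2)`: `Δ(H) = 0`, `Δ(X±) = (1/2)(X± ⊗ H − H ⊗ X±)`. -/
noncomputable def slCobr : (Fin 3 → ℂ) →ₗ[ℂ] (Fin 3 → ℂ) ⊗[ℂ] (Fin 3 → ℂ) :=
  (Pi.basisFun ℂ (Fin 3)).constr ℂ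
    ![0, (1 / 2 : ℂ) • (slXp ⊗ₜ slH - slH ⊗ₜ slXp),
      (1 / 2 : ℂ) • (slXm ⊗ₜ slH - slH ⊗ₜ slXm)]

/-- the Lie bialgebra endomorphism of `sl(2)` determined by `b`:
`α(H) = H`, `α(X₊) = b X₊`, `α(X₋) = b⁻¹ X₋`. -/
noncomputable def slAlpha (b : ℂ) : (Fin 3 → ℂ) →ₗ[ℂ] (Fin 3 → ℂ) :=
  (Pi.basisFun ℂ (Fin 3)).constr ℂ ![slH, b • slXp, b⁻¹ • slXm]

/-- the standard classical `r`-matrix `r = X₊ ⊗ X₋ + (1/4) H ⊗ H` of `sl(2)`. -/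
noncomputable def slR : (Fin 3 → ℂ) ⊗[ℂ] (Fin 3 → ℂ) :=
  slXp ⊗ₜ slXm + (1 / 4 : ℂ) • (slH ⊗ₜ slH)

/-!
Since `Δ H = 0` and `ker Δ = ℂ H`, compatibility with `Δ` gives `α H = t H`. Compatibility
with the bracket makes `α X₊`, `α X₋` eigenvectors of `ad (t H)` for the eigenvalues `2`, `-2`,
and the `X₋ ⊗ H` (resp. `X₊ ⊗ H`) component of the cobracket condition kills their remaining
wrong-weight parts. So `α X₊ = p X₊`, `α X₋ = m X₋` with `t p = p`, `t m = m`, and `[X₊, X₋] = H`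
gives `t = p m`. Hence `t² = t`; `t = 0` forces `α = 0`, so `t = 1` and `m = p⁻¹`.
-/

section Sl2

@[simp] lemma slH_apply_zero : slH 0 = 1 := rfl
@[simp] lemma slH_apply_one : slH 1 = 0 := rfl
@[simp] lemma slH_apply_two : slH 2 = 0 := rfl
@[simp] lemma slXp_apply_zero : slXp 0 = 0 := rfl
@[simp] lemma slXp_apply_one : slXp 1 = 1 := rfl
@[simp] lemma slXp_apply_two : slXp 2 = 0 := rfl
@[simp] lemma slXm_apply_zero : slXm 0 = 0 := rfl
@[simp] lemma slXm_apply_one : slXm 1 = 0 := rfl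
@[simp] lemma slXm_apply_two : slXm 2 = 1 := rfl

lemma sl_hom_ext {M : Type*} [AddCommMonoid M] [Module ℂ M] {f g : (Fin 3 → ℂ) →ₗ[ℂ] M}
    (hH : f slH = g slH) (hXp : f slXp = g slXp) (hXm : f slXm = g slXm) : f = g :=
  (Pi.basisFun ℂ (Fin 3)).ext fun i => by
    fin_cases i <;> simp only [Pi.basisFun_apply]
    exacts [hH, hXp, hXm]

lemma slBr_apply (u v : Fin 3 → ℂ) : slBr u v =
    ![u 1 * v 2 - u 2 * v 1, 2 * (u 0 * v 1 - u 1 * v 0), -2 * (u 0 * v 2 - u 2 * v 0)] :=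
  rfl

lemma slBr_slH_left (v : Fin 3 → ℂ) : slBr slH v = ![0, 2 * v 1, -2 * v 2] := by
  simp [slBr_apply]

lemma slBr_slH_slXp : slBr slH slXp = (2 : ℂ) • slXp := by
  ext i; fin_cases i <;> simp [slBr_slH_left]

lemma slBr_slH_slXm : slBr slH slXm = (-2 : ℂ) • slXm := by
  ext i; fin_cases i <;> simp [slBr_slH_left]

lemma slBr_slXp_slXm : slBr slXp slXm = slH := by
  ext i; fin_cases i <;> simp [slBr_apply]

lemma slCobr_slH : slCobr slH = 0 := by
  simp [slCobr, slH]

lemma slCobr_slXp : slCobr slXp = (1 / 2 : ℂ) • (slXp ⊗ₜ slH - slH ⊗ₜ slXp) := by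
  simp [slCobr, slXp]

lemma slCobr_slXm : slCobr slXm = (1 / 2 : ℂ) • (slXm ⊗ₜ slH - slH ⊗ₜ slXm) := by
  simp [slCobr, slXm]

noncomputable def slTensorCoord (i j : Fin 3) : (Fin 3 → ℂ) ⊗[ℂ] (Fin 3 → ℂ) →ₗ[ℂ] ℂ :=
  ((Pi.basisFun ℂ (Fin 3)).tensorProduct (Pi.basisFun ℂ (Fin 3))).coord (i, j)

@[simp] lemma slTensorCoord_tmul (i j : Fin 3) (u v : Fin 3 → ℂ) :
    slTensorCoord i j (u ⊗ₜ v) = u i * v j := by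
  simp [slTensorCoord, mul_comm]

lemma slCobr_apply (v : Fin 3 → ℂ) : slCobr v = v 1 • slCobr slXp + v 2 • slCobr slXm := by
  simp [slCobr, Module.Basis.constr_apply_fintype, Fin.sum_univ_three, slXp, slXm]

lemma slTensorCoord_slCobr (v : Fin 3 → ℂ) {i : Fin 3} (hi : i ≠ 0) :
    slTensorCoord i 0 (slCobr v) = v i / 2 := by
  fin_cases i
  · exact absurd rfl hi
  all_goals rw [slCobr_apply, slCobr_slXp, slCobr_slXm]; simp; ring

end Sl2

section Forward

variable {α : (Fin 3 → ℂ) →ₗ[ℂ] (Fin 3 → ℂ)}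

lemma apply_slH_eq_smul (hcobr : ∀ x, slCobr (α x) = TensorProduct.map α α (slCobr x)) :
    α slH = α slH 0 • slH := by
  have hker : slCobr (α slH) = 0 := by rw [hcobr, slCobr_slH, map_zero]
  have h1 := slTensorCoord_slCobr (α slH) (i := 1) (by decide)
  have h2 := slTensorCoord_slCobr (α slH) (i := 2) (by decide)
  rw [hker, map_zero] at h1 h2
  ext i; fin_cases i
  · simp
  · simp; linear_combination -2 * h1
  · simp; linear_combination -2 * h2

variable (hbr : ∀ x y, α (slBr x y) = slBr (α x) (α y))
  (hcobr : ∀ x, slCobr (α x) = TensorProduct.map α α (slCobr x))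
include hbr hcobr

lemma apply_slXp_eq_smul :
    α slXp = α slXp 1 • slXp ∧ α slH 0 * α slXp 1 = α slXp 1 := by
  have hH := apply_slH_eq_smul hcobr
  generalize α slH 0 = t at hH ⊢
  have hweight : t • slBr slH (α slXp) = (2 : ℂ) • α slXp := by
    rw [← LinearMap.smul_apply, ← map_smul, ← hH, ← hbr, slBr_slH_slXp, map_smul]
  have h0 := congrFun hweight 0
  have h1 := congrFun hweight 1
  have h2 := congrFun hweight 2
  simp [slBr_slH_left] at h0 h1 h2
  have hco := congrArg (slTensorCoord 2 0) (hcobr slXp)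
  rw [slTensorCoord_slCobr _ (by decide), slCobr_slXp] at hco
  simp [hH] at hco
  refine ⟨?_, by linear_combination h1 / 2⟩
  ext i; fin_cases i
  · simpa using h0
  · simp
  · simp; linear_combination hco - h2 / 4

lemma apply_slXm_eq_smul :
    α slXm = α slXm 2 • slXm ∧ α slH 0 * α slXm 2 = α slXm 2 := by
  have hH := apply_slH_eq_smul hcobr
  generalize α slH 0 = t at hH ⊢
  have hweight : t • slBr slH (α slXm) = (-2 : ℂ) • α slXm := by
    rw [← LinearMap.smul_apply, ← map_smul, ← hH, ← hbr, slBr_slH_slXm, map_smul]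
  have h0 := congrFun hweight 0
  have h1 := congrFun hweight 1
  have h2 := congrFun hweight 2
  simp [slBr_slH_left] at h0 h1 h2
  have hco := congrArg (slTensorCoord 1 0) (hcobr slXm)
  rw [slTensorCoord_slCobr _ (by decide), slCobr_slXm] at hco
  simp [hH] at hco
  refine ⟨?_, by linear_combination h2 / 2⟩
  ext i; fin_cases i
  · simpa using h0
  · simp; linear_combination hco + h1 / 4
  · simp

lemma apply_slH_zero_eq_mul : α slH 0 = α slXp 1 * α slXm 2 := by
  have h := congrFun (hbr slXp slXm) 0
  rw [slBr_slXp_slXm, (apply_slXp_eq_smul hbr hcobr).1, (apply_slXm_eq_smul hbr hcobr).1] at h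
  simp [slBr_apply] at h
  linear_combination h

lemma exists_eq_smul_of_comm (hα : α ≠ 0) :
    ∃ b : ℂ, b ≠ 0 ∧ α slH = slH ∧ α slXp = b • slXp ∧ α slXm = b⁻¹ • slXm := by
  obtain ⟨hXp, hp⟩ := apply_slXp_eq_smul hbr hcobr
  obtain ⟨hXm, hm⟩ := apply_slXm_eq_smul hbr hcobr
  have hH := apply_slH_eq_smul hcobr
  have htpm := apply_slH_zero_eq_mul hbr hcobr
  generalize α slH 0 = t at hH hp hm htpm
  generalize α slXp 1 = p at hXp hp htpm
  generalize α slXm 2 = m at hXm hm htpm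
  have ht : t ≠ 0 := by
    rintro rfl
    have hp0 : p = 0 := by simpa using hp.symm
    have hm0 : m = 0 := by simpa using hm.symm
    exact hα (sl_hom_ext (by simp [hH]) (by simp [hXp, hp0]) (by simp [hXm, hm0]))
  have ht1 : t = 1 := mul_left_cancel₀ ht <| by
    linear_combination (m * hp) + (t - 1) * htpm
  have hpm : p * m = 1 := by rw [← htpm, ht1]
  refine ⟨p, left_ne_zero_of_mul_eq_one hpm, by simp [hH, ht1], hXp, ?_⟩
  rw [hXm, eq_inv_of_mul_eq_one_right hpm]

end Forward

section Backward

variable (b : ℂ)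

lemma slAlpha_slH : slAlpha b slH = slH := by
  simp [slAlpha, slH]

lemma slAlpha_slXp : slAlpha b slXp = b • slXp := by
  simp [slAlpha, slXp]

lemma slAlpha_slXm : slAlpha b slXm = b⁻¹ • slXm := by
  simp [slAlpha, slXm]

lemma slAlpha_apply (x : Fin 3 → ℂ) : slAlpha b x = ![x 0, b * x 1, b⁻¹ * x 2] := by
  ext i
  fin_cases i <;> simp [slAlpha, Module.Basis.constr_apply_fintype, Fin.sum_univ_three, mul_comm]

lemma slAlpha_slBr (hb : b ≠ 0) (x y : Fin 3 → ℂ) :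
    slAlpha b (slBr x y) = slBr (slAlpha b x) (slAlpha b y) := by
  ext i; fin_cases i
  · simp [slAlpha_apply, slBr_apply]
    linear_combination (x 2 * y 1 - x 1 * y 2) * mul_inv_cancel₀ hb
  all_goals simp [slAlpha_apply, slBr_apply]; ring

lemma slCobr_slAlpha (x : Fin 3 → ℂ) :
    slCobr (slAlpha b x) = TensorProduct.map (slAlpha b) (slAlpha b) (slCobr x) := by
  suffices slCobr ∘ₗ slAlpha b = TensorProduct.map (slAlpha b) (slAlpha b) ∘ₗ slCobr from
    LinearMap.congr_fun this x
  refine sl_hom_ext ?_ ?_ ?_ <;>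
    simp [slAlpha_slH, slAlpha_slXp, slAlpha_slXm, slCobr_slH, slCobr_slXp, slCobr_slXm,
      TensorProduct.smul_tmul', TensorProduct.tmul_smul, smul_sub, smul_comm b, smul_comm b⁻¹]

lemma eq_slAlpha {α : (Fin 3 → ℂ) →ₗ[ℂ] (Fin 3 → ℂ)} (hH : α slH = slH)
    (hXp : α slXp = b • slXp) (hXm : α slXm = b⁻¹ • slXm) : α = slAlpha b :=
  sl_hom_ext (by rw [hH, slAlpha_slH]) (by rw [hXp, slAlpha_slXp]) (by rw [hXm, slAlpha_slXm])

end Backward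

/-- the non-zero Lie bialgebra endomorphisms of `sl(2,ℂ)` are exactly
`α(H) = H`, `α(X₊) = b X₊`, `α(X₋) = b⁻¹ X₋` for `b ≠ 0`. -/
theorem stmt3 (α : (Fin 3 → ℂ) →ₗ[ℂ] (Fin 3 → ℂ)) (hα : α ≠ 0) :
    ((∀ x y, α (slBr x y) = slBr (α x) (α y)) ∧
      (∀ x, slCobr (α x) = TensorProduct.map α α (slCobr x)))
    ↔ ∃ b : ℂ, b ≠ 0 ∧ α slH = slH ∧ α slXp = b • slXp ∧ α slXm = b⁻¹ • slXm := by
  constructor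
  · rintro ⟨hbr, hcobr⟩
    exact exists_eq_smul_of_comm hbr hcobr hα
  · rintro ⟨b, hb, hH, hXp, hXm⟩
    obtain rfl := eq_slAlpha b hH hXp hXm
    exact ⟨slAlpha_slBr b hb, slCobr_slAlpha b⟩
end

section
/- If (L,Δ,α) is a Hom-Lie coalgebra, then the linear dual L* with bracket ⟨[φ,ψ],x⟩ = ⟨φ⊗ψ, Δ(x)⟩ and map α*(φ) = φ∘α is a Hom-Lie algebra. -/
open TensorProduct

variable {k : Type*} [Field k]
variable {L : Type*} [AddCommGroup L] [Module k L]

/-- the bracket on the dual `L*` induced by a cobracket `Δ`: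
`⟨[φ,ψ], x⟩ = ⟨φ ⊗ ψ, Δ(x)⟩`. -/
noncomputable def dualBr {k : Type*} [Field k] {L : Type*} [AddCommGroup L] [Module k L]
    (Δ : L →ₗ[k] L ⊗[k] L) :
    Module.Dual k L →ₗ[k] Module.Dual k L →ₗ[k] Module.Dual k L :=
  LinearMap.mk₂ k
    (fun φ ψ => (TensorProduct.lid k k).toLinearMap ∘ₗ TensorProduct.map φ ψ ∘ₗ Δ)
    (by intro φ φ' ψ; ext x
        simp [TensorProduct.map_add_left, LinearMap.add_apply])
    (by intro c φ ψ; ext x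
        simp [TensorProduct.map_smul_left, LinearMap.smul_apply])
    (by intro φ ψ ψ'; ext x
        simp [TensorProduct.map_add_right, LinearMap.add_apply])
    (by intro c φ ψ; ext x
        simp [TensorProduct.map_smul_right, LinearMap.smul_apply])

/-- the cobracket on the dual `L*` induced by a bracket `β`:
`⟨Δ*(φ), x ⊗ y⟩ = ⟨φ, [x,y]⟩` (for finite-dimensional `L`). -/
noncomputable def dualCobr {k : Type*} [Field k] {L : Type*} [AddCommGroup L] [Module k L]
    [FiniteDimensional k L] (β : L →ₗ[k] L →ₗ[k] L) :
    Module.Dual k L →ₗ[k] Module.Dual k L ⊗[k] Module.Dual k L :=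
  (TensorProduct.dualDistribEquiv k L L).symm.toLinearMap ∘ₗ
    (TensorProduct.lift β).dualMap

noncomputable def G3 {k : Type*} [Field k] {L : Type*} [AddCommGroup L] [Module k L]
    (φ ψ θ : Module.Dual k L) : L ⊗[k] (L ⊗[k] L) →ₗ[k] k :=
  (TensorProduct.lid k k).toLinearMap ∘ₗ
    TensorProduct.map φ ((TensorProduct.lid k k).toLinearMap ∘ₗ TensorProduct.map ψ θ)

@[simp] lemma G3_tmul {k : Type*} [Field k] {L : Type*} [AddCommGroup L] [Module k L]
    (φ ψ θ : Module.Dual k L) (x : L) (t : L ⊗[k] L) :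
    G3 φ ψ θ (x ⊗ₜ t) = φ x * (TensorProduct.lid k k) (TensorProduct.map ψ θ t) := by
  simp [G3, smul_eq_mul]

lemma G3_cyc {k : Type*} [Field k] {L : Type*} [AddCommGroup L] [Module k L]
    (φ ψ θ : Module.Dual k L) (t : L ⊗[k] (L ⊗[k] L)) :
    G3 φ ψ θ (cyc t) = G3 ψ θ φ t := by
  have : G3 φ ψ θ ∘ₗ cyc = G3 ψ θ φ := by
    apply TensorProduct.ext'
    intro x u
    induction u using TensorProduct.induction_on with
    | zero => simp
    | tmul y z => simp [cyc, mul_comm, mul_left_comm]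
    | add u v hu hv => simp_all [tmul_add]
  exact DFunLike.congr_fun this t

lemma dualBr_apply {k : Type*} [Field k] {L : Type*} [AddCommGroup L] [Module k L]
    (Δ : L →ₗ[k] L ⊗[k] L) (φ ψ : Module.Dual k L) (x : L) :
    dualBr Δ φ ψ x = (TensorProduct.lid k k) (TensorProduct.map φ ψ (Δ x)) := rfl

lemma lemB {k : Type*} [Field k] {L : Type*} [AddCommGroup L] [Module k L]
    (φ ψ : Module.Dual k L) (t : L ⊗[k] L) :
    (TensorProduct.lid k k) (TensorProduct.map φ ψ ((TensorProduct.comm k L L) t)) =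
      (TensorProduct.lid k k) (TensorProduct.map ψ φ t) := by
  induction t using TensorProduct.induction_on with
  | zero => simp
  | tmul a b => simp [smul_eq_mul, mul_comm]
  | add u v hu hv => simp_all

lemma lemA {k : Type*} [Field k] {L : Type*} [AddCommGroup L] [Module k L]
    (Δ : L →ₗ[k] L ⊗[k] L) (α : L →ₗ[k] L) (φ ψ θ : Module.Dual k L) (t : L ⊗[k] L) :
    (TensorProduct.lid k k) (TensorProduct.map (dualBr Δ ψ θ) (φ ∘ₗ α) t) =
      G3 φ ψ θ (TensorProduct.map α Δ ((TensorProduct.comm k L L) t)) := by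
  induction t using TensorProduct.induction_on with
  | zero => simp
  | tmul a b => simp [dualBr_apply, smul_eq_mul, mul_comm]
  | add u v hu hv => simp_all


/-- the dual of a Hom-Lie coalgebra is a Hom-Lie algebra. -/
theorem stmt6 {k : Type*} [Field k] [CharZero k] {L : Type*} [AddCommGroup L] [Module k L]
    (Δ : L →ₗ[k] L ⊗[k] L) (α : L →ₗ[k] L) (h : IsHomLieCoalg Δ α) :
    IsHomLie (dualBr Δ) α.dualMap := by
  obtain ⟨h1, h2, h3⟩ := h
  refine ⟨?_, ?_, ?_⟩
  · intro φ ψ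
    ext x
    have := h2 x
    rw [dualBr_apply, ← lemB ψ φ (Δ x)]
    simp [this, dualBr_apply]
  · intro φ ψ
    ext x
    have key : Module.Dual.eval k L = Module.Dual.eval k L := rfl
    simp only [LinearMap.dualMap_apply, dualBr_apply, h1 x]
    rw [show (α.dualMap φ : Module.Dual k L) = φ ∘ₗ α from rfl,
        show (α.dualMap ψ : Module.Dual k L) = ψ ∘ₗ α from rfl,
        TensorProduct.map_comp, LinearMap.comp_apply]
  · intro φ ψ θ
    ext x
    set T := TensorProduct.map α Δ (Δ x) with hT
    have hterm : ∀ f g h' : Module.Dual k L,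
        dualBr Δ (dualBr Δ f g) (α.dualMap h') x = - G3 h' f g T := by
      intro f g h'
      rw [dualBr_apply, show (α.dualMap h' : Module.Dual k L) = h' ∘ₗ α from rfl,
          lemA Δ α h' f g (Δ x), h2 x]
      simp [hT]
    have hcj := h3 x
    have := DFunLike.congr_arg (G3 φ ψ θ) hcj
    simp only [cycSum, LinearMap.add_apply, LinearMap.comp_apply, LinearMap.id_apply,
      map_add, G3_cyc, map_zero] at this
    rw [← hT] at this
    simp only [LinearMap.add_apply, LinearMap.zero_apply, hterm]
    linear_combination -this
end

section
/- Let (L,[-,-],Δ) be a Lie bialgebra and α : L → L a Lie bialgebra morphism. Then (L, [-,-]_α, Δ_α, α) is a Hom-Lie bialgebra, where [x,y]_α = α([x,y]) and Δ_α = Δ∘α. -/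
open TensorProduct

variable {k : Type*} [Field k]
variable {L : Type*} [AddCommGroup L] [Module k L]

/-- twisting a Lie bialgebra (a Hom-Lie bialgebra with `α = Id`) by a
Lie bialgebra endomorphism gives a Hom-Lie bialgebra. -/
theorem stmt8 {k : Type*} [Field k] [CharZero k] {L : Type*} [AddCommGroup L] [Module k L]
    (β : L →ₗ[k] L →ₗ[k] L) (Δ : L →ₗ[k] L ⊗[k] L)
    (hLie : IsHomLieBialg β Δ (LinearMap.id : L →ₗ[k] L))
    (α : L →ₗ[k] L)
    (hbr : ∀ x y, α (β x y) = β (α x) (α y))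
    (hcobr : ∀ x, Δ (α x) = TensorProduct.map α α (Δ x)) :
    IsHomLieBialg (LinearMap.compr₂ β α) (Δ ∘ₗ α) α := by
  obtain ⟨⟨hanti, -, hjac⟩, ⟨-, hcoanti, hcojac⟩, hcompat⟩ := hLie
  simp only [LinearMap.id_apply] at hjac hcojac
  have hadT2 : ∀ u : L, TensorProduct.map α α ∘ₗ adT2 β LinearMap.id u
      = adT2 (LinearMap.compr₂ β α) α u := by
    intro u
    apply TensorProduct.ext'
    intro a b
    simp [adT2, LinearMap.compr₂_apply, tmul_add]
  refine ⟨⟨?_, ?_, ?_⟩, ⟨?_, ?_, ?_⟩, ?_⟩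
  · intro x y
    simp [LinearMap.compr₂_apply, hanti x y]
  · intro x y
    simp only [LinearMap.compr₂_apply]
    rw [hbr x y]
  · intro x y z
    simp only [LinearMap.compr₂_apply, ← hbr, ← map_add]
    rw [hjac x y z]
    simp
  · intro x
    simp only [LinearMap.comp_apply]
    exact hcobr (α x)
  · intro x
    exact hcoanti (α x)
  · intro x
    set T : L ⊗[k] (L ⊗[k] L) →ₗ[k] L ⊗[k] (L ⊗[k] L) :=
      TensorProduct.map (α ∘ₗ α) (TensorProduct.map (α ∘ₗ α) (α ∘ₗ α)) with hT
    have key : TensorProduct.map α (Δ ∘ₗ α) ((Δ ∘ₗ α) x)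
        = T (TensorProduct.map LinearMap.id Δ (Δ x)) := by
      rw [LinearMap.comp_apply, hcobr x]
      induction (Δ x) using TensorProduct.induction_on with
      | zero => simp
      | tmul a b =>
        simp only [TensorProduct.map_tmul, LinearMap.comp_apply, LinearMap.id_apply, hT]
        congr 1
        rw [hcobr, hcobr, ← LinearMap.comp_apply, ← TensorProduct.map_comp]
      | add u v hu hv => simp only [map_add, hu, hv]
    have hcycT : cyc ∘ₗ T = T ∘ₗ cyc := by
      apply TensorProduct.ext'
      intro a w
      induction w using TensorProduct.induction_on with
      | zero => simp
      | tmul b c =>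
        simp only [hT, LinearMap.comp_apply, cyc, TensorProduct.map_tmul,
          LinearEquiv.coe_coe, TensorProduct.assoc_symm_tmul, TensorProduct.comm_tmul]
      | add u v hu hv => simp only [tmul_add, map_add, hu, hv]
    have hcsT : cycSum ∘ₗ T = T ∘ₗ cycSum := by
      simp only [cycSum, LinearMap.add_comp, LinearMap.comp_add, LinearMap.comp_assoc,
        LinearMap.id_comp, LinearMap.comp_id, hcycT]
      rw [← LinearMap.comp_assoc, hcycT, LinearMap.comp_assoc]
    show cycSum (TensorProduct.map α (Δ ∘ₗ α) ((Δ ∘ₗ α) x)) = 0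
    rw [key, ← LinearMap.comp_apply, hcsT, LinearMap.comp_apply, hcojac, map_zero]
  · intro x y
    have : (Δ ∘ₗ α) (LinearMap.compr₂ β α x y) = Δ (α (β (α x) (α y))) := by
      simp [LinearMap.compr₂_apply, hbr]
    rw [this, hcobr, hcompat (α x) (α y), map_sub,
      ← LinearMap.comp_apply (TensorProduct.map α α), hadT2,
      ← LinearMap.comp_apply (TensorProduct.map α α), hadT2]
    rfl
end

section
/- Let g and h be Lie bialgebras and α : g → g, β : h → h Lie bialgebra morphisms with β and β⊗β injective. Then the Hom-Lie bialgebras g_α and h_β are isomorphic if and only if there exists a Lie bialgebra isomorphism γ : g → h with γ∘α = β∘γ. -/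
open TensorProduct

variable {k : Type*} [Field k]
variable {L : Type*} [AddCommGroup L] [Module k L]

/-- for Lie bialgebras `g`, `h` with endomorphisms `α`, `β'` (with `β'`
and `β'⊗β'` injective), the twisted Hom-Lie bialgebras `g_α` and `h_{β'}` are
isomorphic iff there is a Lie bialgebra isomorphism `γ : g → h` with `γ∘α = β'∘γ`. -/
theorem stmt9 {k : Type*} [Field k] [CharZero k]
    {G : Type*} [AddCommGroup G] [Module k G] {H : Type*} [AddCommGroup H] [Module k H]
    (βg : G →ₗ[k] G →ₗ[k] G) (Δg : G →ₗ[k] G ⊗[k] G)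
    (βh : H →ₗ[k] H →ₗ[k] H) (Δh : H →ₗ[k] H ⊗[k] H)
    (hg : IsHomLieBialg βg Δg (LinearMap.id : G →ₗ[k] G))
    (hh : IsHomLieBialg βh Δh (LinearMap.id : H →ₗ[k] H))
    (α : G →ₗ[k] G) (β' : H →ₗ[k] H)
    (hα₁ : ∀ x y, α (βg x y) = βg (α x) (α y))
    (hα₂ : ∀ x, Δg (α x) = TensorProduct.map α α (Δg x))
    (hβ₁ : ∀ x y, β' (βh x y) = βh (β' x) (β' y))
    (hβ₂ : ∀ x, Δh (β' x) = TensorProduct.map β' β' (Δh x))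
    (hinj : Function.Injective β')
    (hinj2 : Function.Injective (TensorProduct.map β' β')) :
    (∃ γ : G ≃ₗ[k] H,
        (∀ x, γ (α x) = β' (γ x)) ∧
        (∀ x y, γ ((LinearMap.compr₂ βg α) x y) = (LinearMap.compr₂ βh β') (γ x) (γ y)) ∧
        (∀ x, (Δh ∘ₗ β') (γ x) =
          TensorProduct.map (γ : G →ₗ[k] H) (γ : G →ₗ[k] H) ((Δg ∘ₗ α) x)))
    ↔ (∃ γ : G ≃ₗ[k] H,
        (∀ x y, γ (βg x y) = βh (γ x) (γ y)) ∧
        (∀ x, Δh (γ x) = TensorProduct.map (γ : G →ₗ[k] H) (γ : G →ₗ[k] H) (Δg x)) ∧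
        (∀ x, γ (α x) = β' (γ x))) := by
  constructor
  · rintro ⟨γ, h1, h2, h3⟩
    have key : TensorProduct.map β' β' ∘ₗ TensorProduct.map (γ : G →ₗ[k] H) (γ : G →ₗ[k] H)
        = TensorProduct.map (γ : G →ₗ[k] H) (γ : G →ₗ[k] H) ∘ₗ TensorProduct.map α α := by
      rw [← TensorProduct.map_comp, ← TensorProduct.map_comp]
      congr 1 <;> ext x <;> simp [h1]
    refine ⟨γ, ?_, ?_, h1⟩
    · intro x y
      apply hinj
      have := h2 x y
      simp only [LinearMap.compr₂_apply] at this
      rw [← h1]; exact this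
    · intro x
      apply hinj2
      have := h3 x
      simp only [LinearMap.comp_apply] at this
      calc TensorProduct.map β' β' (Δh (γ x))
          = Δh (β' (γ x)) := (hβ₂ _).symm
        _ = TensorProduct.map (γ : G →ₗ[k] H) (γ : G →ₗ[k] H) (Δg (α x)) := this
        _ = (TensorProduct.map (γ : G →ₗ[k] H) (γ : G →ₗ[k] H) ∘ₗ
              TensorProduct.map α α) (Δg x) := by rw [LinearMap.comp_apply, ← hα₂]
        _ = TensorProduct.map β' β'
              (TensorProduct.map (γ : G →ₗ[k] H) (γ : G →ₗ[k] H) (Δg x)) := by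
            rw [← key]; rfl
  · rintro ⟨γ, h1, h2, h3⟩
    have key : TensorProduct.map β' β' ∘ₗ TensorProduct.map (γ : G →ₗ[k] H) (γ : G →ₗ[k] H)
        = TensorProduct.map (γ : G →ₗ[k] H) (γ : G →ₗ[k] H) ∘ₗ TensorProduct.map α α := by
      rw [← TensorProduct.map_comp, ← TensorProduct.map_comp]
      congr 1 <;> ext x <;> simp [h3]
    refine ⟨γ, h3, ?_, ?_⟩
    · intro x y
      simp only [LinearMap.compr₂_apply]
      rw [hα₁, h1, h3, h3, ← hβ₁]
    · intro x
      simp only [LinearMap.comp_apply]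
      rw [hβ₂, h2, hα₂]
      exact LinearMap.congr_fun key (Δg x)
end

section
/- Let g be a Lie bialgebra and α, β invertible Lie bialgebra automorphisms of g. Then the Hom-Lie bialgebras g_α and g_β are isomorphic if and only if α and β are conjugate in the automorphism group Aut(g). -/
open TensorProduct

variable {k : Type*} [Field k]
variable {L : Type*} [AddCommGroup L] [Module k L]

/-- for invertible Lie bialgebra automorphisms `α`, `β` of a Lie
bialgebra `g`, the Hom-Lie bialgebras `g_α` and `g_β` are isomorphic iff `α` and
`β` are conjugate in the automorphism group of `g`. -/
theorem stmt10 {k : Type*} [Field k] [CharZero k] {G : Type*} [AddCommGroup G] [Module k G]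
    (βg : G →ₗ[k] G →ₗ[k] G) (Δg : G →ₗ[k] G ⊗[k] G)
    (hg : IsHomLieBialg βg Δg (LinearMap.id : G →ₗ[k] G))
    (α β : G ≃ₗ[k] G)
    (hα₁ : ∀ x y, α (βg x y) = βg (α x) (α y))
    (hα₂ : ∀ x, Δg (α x) = TensorProduct.map (α : G →ₗ[k] G) (α : G →ₗ[k] G) (Δg x))
    (hβ₁ : ∀ x y, β (βg x y) = βg (β x) (β y))
    (hβ₂ : ∀ x, Δg (β x) = TensorProduct.map (β : G →ₗ[k] G) (β : G →ₗ[k] G) (Δg x)) :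
    (∃ γ : G ≃ₗ[k] G,
        (∀ x, γ (α x) = β (γ x)) ∧
        (∀ x y, γ ((LinearMap.compr₂ βg (α : G →ₗ[k] G)) x y) =
          (LinearMap.compr₂ βg (β : G →ₗ[k] G)) (γ x) (γ y)) ∧
        (∀ x, (Δg ∘ₗ (β : G →ₗ[k] G)) (γ x) =
          TensorProduct.map (γ : G →ₗ[k] G) (γ : G →ₗ[k] G) ((Δg ∘ₗ (α : G →ₗ[k] G)) x)))
    ↔ (∃ γ : G ≃ₗ[k] G,
        (∀ x y, γ (βg x y) = βg (γ x) (γ y)) ∧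
        (∀ x, Δg (γ x) = TensorProduct.map (γ : G →ₗ[k] G) (γ : G →ₗ[k] G) (Δg x)) ∧
        (∀ x, γ (α (γ.symm x)) = β x)) := by
  have mm : ∀ (f g f' g' : G →ₗ[k] G) (t : G ⊗[k] G),
      TensorProduct.map f g (TensorProduct.map f' g' t) =
      TensorProduct.map (f ∘ₗ f') (g ∘ₗ g') t := by
    intro f g f' g' t
    rw [← LinearMap.comp_apply, ← TensorProduct.map_comp]
  have cancel : ∀ t u : G ⊗[k] G,
      TensorProduct.map (β : G →ₗ[k] G) (β : G →ₗ[k] G) t =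
      TensorProduct.map (β : G →ₗ[k] G) (β : G →ₗ[k] G) u → t = u := by
    intro t u h
    have h2 := congrArg (TensorProduct.map (β.symm : G →ₗ[k] G) (β.symm : G →ₗ[k] G)) h
    rwa [mm, mm,
      show (β.symm : G →ₗ[k] G) ∘ₗ (β : G →ₗ[k] G) = LinearMap.id from
        LinearMap.ext fun x => β.symm_apply_apply x,
      TensorProduct.map_id, LinearMap.id_apply, LinearMap.id_apply] at h2
  constructor
  · rintro ⟨γ, h1, h2, h3⟩
    have hγα : ((γ : G →ₗ[k] G) ∘ₗ (α : G →ₗ[k] G)) = ((β : G →ₗ[k] G) ∘ₗ (γ : G →ₗ[k] G)) :=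
      LinearMap.ext fun z => h1 z
    refine ⟨γ, ?_, ?_, ?_⟩
    · intro x y
      have h := h2 x y
      simp only [LinearMap.compr₂_apply, LinearEquiv.coe_coe] at h
      rw [h1] at h
      exact β.injective h
    · intro x
      apply cancel
      rw [← hβ₂ (γ x)]
      have h := h3 x
      simp only [LinearMap.comp_apply, LinearEquiv.coe_coe] at h
      rw [h, hα₂ x, mm, mm, hγα]
    · intro x
      rw [h1, γ.apply_symm_apply]
  · rintro ⟨γ, h1, h2, h3⟩
    have hc : ∀ x, γ (α x) = β (γ x) := by
      intro x
      have := h3 (γ x)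
      rwa [γ.symm_apply_apply] at this
    refine ⟨γ, hc, ?_, ?_⟩
    · intro x y
      simp only [LinearMap.compr₂_apply, LinearEquiv.coe_coe]
      rw [hc, h1]
    · intro x
      simp only [LinearMap.comp_apply, LinearEquiv.coe_coe]
      rw [← hc, h2 (α x), hα₂ x, mm]
end

section
/- Let (L,[-,-],Δ,α) be a finite dimensional Hom-Lie bialgebra. Then L* = Hom(L,k) is also a Hom-Lie bialgebra with structure maps α*(φ) = φ∘α, ⟨[φ,ψ],x⟩ = ⟨φ⊗ψ,Δ(x)⟩, and ⟨Δ*(φ), x⊗y⟩ = ⟨φ,[x,y]⟩. -/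
open TensorProduct

variable {k : Type*} [Field k]
variable {L : Type*} [AddCommGroup L] [Module k L]

section Aux
variable {k : Type*} [Field k] {L : Type*} [AddCommGroup L] [Module k L]

local notation "D2" => TensorProduct.dualDistrib k L L
local notation "Dl" => Module.Dual k L

lemma dualBr_apply' (Δ : L →ₗ[k] L ⊗[k] L) (φ ψ : Dl) (x : L) :
    dualBr Δ φ ψ x = D2 (φ ⊗ₜ ψ) (Δ x) := rfl

lemma d2_eq_equiv [FiniteDimensional k L] (t : Dl ⊗[k] Dl) :
    D2 t = TensorProduct.dualDistribEquiv k L L t := rfl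

lemma ext2 [FiniteDimensional k L] {s t : Dl ⊗[k] Dl}
    (h : ∀ x y : L, D2 s (x ⊗ₜ y) = D2 t (x ⊗ₜ y)) : s = t := by
  apply (TensorProduct.dualDistribEquiv k L L).injective
  rw [← d2_eq_equiv, ← d2_eq_equiv]
  exact TensorProduct.ext' h

lemma d2_dualCobr [FiniteDimensional k L] (β : L →ₗ[k] L →ₗ[k] L) (φ : Dl) (x y : L) :
    D2 (dualCobr β φ) (x ⊗ₜ y) = φ (β x y) := by
  have : D2 (dualCobr β φ) = (TensorProduct.lift β).dualMap φ := by
    rw [d2_eq_equiv]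
    exact (TensorProduct.dualDistribEquiv k L L).apply_symm_apply _
  rw [this]
  simp

lemma d2_map_dual (f g : L →ₗ[k] L) (t : Dl ⊗[k] Dl) (x y : L) :
    D2 (TensorProduct.map f.dualMap g.dualMap t) (x ⊗ₜ y) = D2 t (f x ⊗ₜ g y) := by
  induction t using TensorProduct.induction_on with
  | zero => simp
  | tmul u v => simp
  | add a b ha hb => simp [ha, hb]

lemma d2_comm (t : Dl ⊗[k] Dl) (x y : L) :
    D2 (TensorProduct.comm k Dl Dl t) (x ⊗ₜ y) = D2 t (y ⊗ₜ x) := by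
  induction t using TensorProduct.induction_on with
  | zero => simp
  | tmul u v => simp [mul_comm]
  | add a b ha hb => simp [ha, hb]

lemma d2_comp_map (φ ψ : Dl) (f g : L →ₗ[k] L) (t : L ⊗[k] L) :
    D2 (φ ⊗ₜ ψ) (TensorProduct.map f g t) = D2 ((φ ∘ₗ f) ⊗ₜ (ψ ∘ₗ g)) t := by
  induction t using TensorProduct.induction_on with
  | zero => simp
  | tmul u v => simp
  | add a b ha hb => simp [ha, hb]

/-- antisymmetry of Δ gives a swap with sign. -/
lemma d2_swap_delta {Δ : L →ₗ[k] L ⊗[k] L}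
    (hanti : ∀ x, TensorProduct.comm k L L (Δ x) = - Δ x) (φ ψ : Dl) (x : L) :
    D2 (φ ⊗ₜ ψ) (Δ x) = - D2 (ψ ⊗ₜ φ) (Δ x) := by
  have h1 : Δ x = - TensorProduct.comm k L L (Δ x) := by rw [hanti]; simp
  calc D2 (φ ⊗ₜ ψ) (Δ x) = - D2 (φ ⊗ₜ ψ) (TensorProduct.comm k L L (Δ x)) := by
        rw [← map_neg, ← h1]
    _ = - D2 (ψ ⊗ₜ φ) (Δ x) := by
        congr 1
        induction (Δ x) using TensorProduct.induction_on with
        | zero => simp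
        | tmul u v => simp [mul_comm]
        | add a b ha hb => simp [ha, hb]

end Aux

set_option synthInstance.maxHeartbeats 400000

section Aux2
variable {k : Type*} [Field k] {L : Type*} [AddCommGroup L] [Module k L]

local notation "D2" => TensorProduct.dualDistrib k L L
local notation "Dl" => Module.Dual k L

/-- pairing of `Dl ⊗ (Dl ⊗ Dl)` with `L ⊗ (L ⊗ L)`. -/
noncomputable def e3 : Dl ⊗[k] (Dl ⊗[k] Dl) →ₗ[k] Module.Dual k (L ⊗[k] (L ⊗[k] L)) :=
  TensorProduct.dualDistrib k L (L ⊗[k] L) ∘ₗ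
    TensorProduct.map LinearMap.id (TensorProduct.dualDistrib k L L)

lemma e3_tmul (φ ψ χ : Dl) (x y z : L) :
    e3 (φ ⊗ₜ (ψ ⊗ₜ χ)) (x ⊗ₜ (y ⊗ₜ z)) = φ x * (ψ y * χ z) := by
  simp [e3]

lemma e3_tmul_mid (φ : Dl) (w : Dl ⊗[k] Dl) (x : L) (s : L ⊗[k] L) :
    e3 (φ ⊗ₜ w) (x ⊗ₜ s) = φ x * D2 w s := by
  simp [e3]

lemma e3_eq_equiv [FiniteDimensional k L] (s : Dl ⊗[k] (Dl ⊗[k] Dl)) :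
    e3 s = ((TensorProduct.congr (LinearEquiv.refl k Dl)
      (TensorProduct.dualDistribEquiv k L L)).trans
      (TensorProduct.dualDistribEquiv k L (L ⊗[k] L))) s := rfl

lemma ext3 [FiniteDimensional k L] {s t : Dl ⊗[k] (Dl ⊗[k] Dl)}
    (h : ∀ x y z : L, e3 s (x ⊗ₜ (y ⊗ₜ z)) = e3 t (x ⊗ₜ (y ⊗ₜ z))) : s = t := by
  apply ((TensorProduct.congr (LinearEquiv.refl k Dl)
      (TensorProduct.dualDistribEquiv k L L)).trans
      (TensorProduct.dualDistribEquiv k L (L ⊗[k] L))).injective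
  rw [← e3_eq_equiv, ← e3_eq_equiv]
  apply TensorProduct.ext'
  intro x w
  induction w using TensorProduct.induction_on with
  | zero => simp
  | tmul y z => exact h x y z
  | add a b ha hb => simp [TensorProduct.tmul_add, ha, hb]

lemma e3_cyc_dual (s : Dl ⊗[k] (Dl ⊗[k] Dl)) (x y z : L) :
    e3 (cyc s) (x ⊗ₜ (y ⊗ₜ z)) = e3 s (y ⊗ₜ (z ⊗ₜ x)) := by
  induction s using TensorProduct.induction_on with
  | zero => simp
  | tmul u w =>
    induction w using TensorProduct.induction_on with
    | zero => simp
    | tmul v v' => simp [cyc, e3_tmul]; ring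
    | add a b ha hb => simp [TensorProduct.tmul_add, ha, hb]
  | add a b ha hb => simp [ha, hb]

lemma e3_apply_cyc (η ζ θ : Dl) (t : L ⊗[k] (L ⊗[k] L)) :
    e3 (η ⊗ₜ (ζ ⊗ₜ θ)) (cyc t) = e3 (ζ ⊗ₜ (θ ⊗ₜ η)) t := by
  induction t using TensorProduct.induction_on with
  | zero => simp
  | tmul x w =>
    induction w using TensorProduct.induction_on with
    | zero => simp
    | tmul y z => simp [cyc, e3_tmul]; ring
    | add a b ha hb => simp [TensorProduct.tmul_add, ha, hb]
  | add a b ha hb => simp [ha, hb]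

lemma e3_map_dualCobr [FiniteDimensional k L] (β : L →ₗ[k] L →ₗ[k] L) (α : L →ₗ[k] L)
    (t : Dl ⊗[k] Dl) (x y z : L) :
    e3 (TensorProduct.map α.dualMap (dualCobr β) t) (x ⊗ₜ (y ⊗ₜ z))
      = D2 t (α x ⊗ₜ β y z) := by
  induction t using TensorProduct.induction_on with
  | zero => simp
  | tmul u v =>
    rw [TensorProduct.map_tmul, e3_tmul_mid, d2_dualCobr]
    simp
  | add a b ha hb => simp [ha, hb]

end Aux2

section Aux3
variable {k : Type*} [Field k] {L : Type*} [AddCommGroup L] [Module k L]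

local notation "D2" => TensorProduct.dualDistrib k L L
local notation "Dl" => Module.Dual k L

lemma d2_adT2_dual (Δ : L →ₗ[k] L ⊗[k] L) (α : L →ₗ[k] L) (ξ : Dl)
    (t : Dl ⊗[k] Dl) (x y : L) :
    D2 (adT2 (dualBr Δ) α.dualMap ξ t) (x ⊗ₜ y)
      = D2 (ξ ⊗ₜ ((D2 t) ∘ₗ (TensorProduct.mk k L L).flip (α y))) (Δ x)
      + D2 (ξ ⊗ₜ ((D2 t) ∘ₗ TensorProduct.mk k L L (α x))) (Δ y) := by
  induction t using TensorProduct.induction_on with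
  | zero => simp
  | tmul u v =>
    have h1 : (D2 (u ⊗ₜ v)) ∘ₗ (TensorProduct.mk k L L).flip (α y) = v (α y) • u := by
      ext q; simp [mul_comm]
    have h2 : (D2 (u ⊗ₜ v)) ∘ₗ TensorProduct.mk k L L (α x) = u (α x) • v := by
      ext q; simp
    rw [h1, h2, TensorProduct.tmul_smul, TensorProduct.tmul_smul, map_smul, map_smul]
    simp only [adT2, TensorProduct.map_tmul, LinearMap.add_apply, map_add,
      TensorProduct.dualDistrib_apply, LinearMap.smul_apply, smul_eq_mul,
      dualBr_apply', LinearMap.dualMap_apply]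
    ring
  | add a b ha hb =>
    simp only [map_add, TensorProduct.tmul_add, LinearMap.add_comp, ha, hb,
      LinearMap.add_apply]
    abel

lemma jacobi_term (Δ : L →ₗ[k] L ⊗[k] L) (α : L →ₗ[k] L)
    (hanti : ∀ x, TensorProduct.comm k L L (Δ x) = - Δ x)
    (η ζ θ : Dl) (x : L) :
    dualBr Δ (dualBr Δ η ζ) (α.dualMap θ) x
      = - e3 (θ ⊗ₜ (η ⊗ₜ ζ)) (TensorProduct.map α Δ (Δ x)) := by
  have key : D2 ((dualBr Δ η ζ) ⊗ₜ (α.dualMap θ))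
      = (e3 (θ ⊗ₜ (η ⊗ₜ ζ)) ∘ₗ TensorProduct.map α Δ) ∘ₗ
        (TensorProduct.comm k L L).toLinearMap := by
    apply TensorProduct.ext'
    intro u v
    simp only [TensorProduct.dualDistrib_apply, LinearMap.coe_comp, LinearEquiv.coe_coe,
      Function.comp_apply, TensorProduct.comm_tmul, TensorProduct.map_tmul]
    rw [e3_tmul_mid, dualBr_apply', LinearMap.dualMap_apply]
    ring
  rw [dualBr_apply', key]
  simp only [LinearMap.coe_comp, LinearEquiv.coe_coe, Function.comp_apply, hanti, map_neg]

end Aux3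

section Aux4
variable {k : Type*} [Field k] {L : Type*} [AddCommGroup L] [Module k L]

lemma dualMap_eq (f : L →ₗ[k] L) (φ : Module.Dual k L) : f.dualMap φ = φ ∘ₗ f := rfl

end Aux4

set_option maxHeartbeats 1000000 in
/-- the dual of a finite-dimensional Hom-Lie bialgebra is a
Hom-Lie bialgebra. -/
theorem stmt12 {k : Type*} [Field k] [CharZero k] {L : Type*} [AddCommGroup L] [Module k L]
    [FiniteDimensional k L]
    (β : L →ₗ[k] L →ₗ[k] L) (Δ : L →ₗ[k] L ⊗[k] L) (α : L →ₗ[k] L)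
    (h : IsHomLieBialg β Δ α) :
    IsHomLieBialg (dualBr Δ) (dualCobr β) α.dualMap := by
  obtain ⟨⟨hba, hbm, hbj⟩, ⟨hcm, hca, hcj⟩, hcompat⟩ := h
  refine ⟨⟨?_, ?_, ?_⟩, ⟨?_, ?_, ?_⟩, ?_⟩
  · -- antisymmetry of dualBr
    intro φ ψ; ext x
    rw [dualBr_apply', d2_swap_delta hca]
    simp [dualBr_apply']
  · -- multiplicativity
    intro φ ψ; ext x
    rw [LinearMap.dualMap_apply, dualBr_apply', hcm, d2_comp_map, dualBr_apply',
      dualMap_eq, dualMap_eq]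
  · -- Hom-Jacobi for dualBr
    intro φ ψ χ; ext x
    set T := TensorProduct.map α Δ (Δ x) with hT
    rw [LinearMap.add_apply, LinearMap.add_apply, jacobi_term Δ α hca,
      jacobi_term Δ α hca, jacobi_term Δ α hca, LinearMap.zero_apply]
    have h1 : e3 (ψ ⊗ₜ (χ ⊗ₜ φ)) T = e3 (φ ⊗ₜ (ψ ⊗ₜ χ)) (cyc T) :=
      (e3_apply_cyc φ ψ χ T).symm
    have h2 : e3 (χ ⊗ₜ (φ ⊗ₜ ψ)) T = e3 (φ ⊗ₜ (ψ ⊗ₜ χ)) (cyc (cyc T)) := by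
      rw [e3_apply_cyc, e3_apply_cyc]
    have hz : T + cyc T + cyc (cyc T) = 0 := by
      have := hcj x
      simpa [cycSum, hT] using this
    have h3 : e3 (φ ⊗ₜ (ψ ⊗ₜ χ)) T + e3 (φ ⊗ₜ (ψ ⊗ₜ χ)) (cyc T)
        + e3 (φ ⊗ₜ (ψ ⊗ₜ χ)) (cyc (cyc T)) = 0 := by
      rw [← map_add, ← map_add, hz, map_zero]
    rw [h1, h2]
    linear_combination -h3
  · -- dualCobr commutes with dualMap
    intro φ
    apply ext2
    intro x y
    rw [d2_dualCobr, d2_map_dual, d2_dualCobr, LinearMap.dualMap_apply, hbm]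
  · -- antisymmetry of dualCobr
    intro φ
    apply ext2
    intro x y
    rw [d2_comm, d2_dualCobr, hba y x, map_neg φ,
      map_neg (TensorProduct.dualDistrib k L L), LinearMap.neg_apply, d2_dualCobr]
  · -- co-Jacobi for dualCobr
    intro φ
    apply ext3
    intro x y z
    set s := TensorProduct.map α.dualMap (dualCobr β) (dualCobr β φ) with hs
    have hc1 : e3 (cyc s) (x ⊗ₜ (y ⊗ₜ z)) = e3 s (y ⊗ₜ (z ⊗ₜ x)) := e3_cyc_dual s x y z
    have hc2 : e3 (cyc (cyc s)) (x ⊗ₜ (y ⊗ₜ z)) = e3 s (z ⊗ₜ (x ⊗ₜ y)) := by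
      rw [e3_cyc_dual, e3_cyc_dual]
    have hv : ∀ a b c : L, e3 s (a ⊗ₜ (b ⊗ₜ c)) = φ (β (α a) (β b c)) := by
      intro a b c
      rw [hs, e3_map_dualCobr, d2_dualCobr]
    have h0 : φ (β (β x y) (α z)) + φ (β (β z x) (α y)) + φ (β (β y z) (α x)) = 0 := by
      rw [← map_add, ← map_add, hbj, map_zero]
    simp only [cycSum, LinearMap.add_apply, LinearMap.id_apply, LinearMap.coe_comp,
      Function.comp_apply, map_add, map_zero, LinearMap.zero_apply]
    rw [hc1, hc2, hv, hv, hv, hba (α x) (β y z), hba (α y) (β z x), hba (α z) (β x y)]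
    simp only [map_neg]
    linear_combination -h0
  · -- compatibility
    intro φ ψ
    apply ext2
    intro x y
    have hF1ψ : (TensorProduct.dualDistrib k L L (dualCobr β ψ)) ∘ₗ
        (TensorProduct.mk k L L).flip (α y) = -(ψ ∘ₗ β (α y)) := by
      ext q
      simp only [LinearMap.coe_comp, Function.comp_apply, TensorProduct.mk_apply,
        LinearMap.flip_apply, LinearMap.neg_apply]
      rw [d2_dualCobr, hba q (α y)]
      exact map_neg _ _
    have hF2ψ : (TensorProduct.dualDistrib k L L (dualCobr β ψ)) ∘ₗ
        TensorProduct.mk k L L (α x) = ψ ∘ₗ β (α x) := by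
      ext q
      simp only [LinearMap.coe_comp, Function.comp_apply, TensorProduct.mk_apply]
      rw [d2_dualCobr]
    have hF1φ : (TensorProduct.dualDistrib k L L (dualCobr β φ)) ∘ₗ
        (TensorProduct.mk k L L).flip (α y) = -(φ ∘ₗ β (α y)) := by
      ext q
      simp only [LinearMap.coe_comp, Function.comp_apply, TensorProduct.mk_apply,
        LinearMap.flip_apply, LinearMap.neg_apply]
      rw [d2_dualCobr, hba q (α y)]
      exact map_neg _ _
    have hF2φ : (TensorProduct.dualDistrib k L L (dualCobr β φ)) ∘ₗ
        TensorProduct.mk k L L (α x) = φ ∘ₗ β (α x) := by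
      ext q
      simp only [LinearMap.coe_comp, Function.comp_apply, TensorProduct.mk_apply]
      rw [d2_dualCobr]
    have hL : TensorProduct.dualDistrib k L L (φ ⊗ₜ ψ) (Δ (β x y))
        = TensorProduct.dualDistrib k L L ((φ ∘ₗ β (α x)) ⊗ₜ (ψ ∘ₗ α)) (Δ y)
          + TensorProduct.dualDistrib k L L ((φ ∘ₗ α) ⊗ₜ (ψ ∘ₗ β (α x))) (Δ y)
          - TensorProduct.dualDistrib k L L ((φ ∘ₗ β (α y)) ⊗ₜ (ψ ∘ₗ α)) (Δ x)
          - TensorProduct.dualDistrib k L L ((φ ∘ₗ α) ⊗ₜ (ψ ∘ₗ β (α y))) (Δ x) := by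
      rw [hcompat]
      simp only [map_sub, adT2, LinearMap.add_apply, map_add, d2_comp_map]
      ring
    have hR : TensorProduct.dualDistrib k L L
        (adT2 (dualBr Δ) α.dualMap (α.dualMap φ) (dualCobr β ψ)
          - adT2 (dualBr Δ) α.dualMap (α.dualMap ψ) (dualCobr β φ)) (x ⊗ₜ y)
        = - TensorProduct.dualDistrib k L L ((φ ∘ₗ α) ⊗ₜ (ψ ∘ₗ β (α y))) (Δ x)
          + TensorProduct.dualDistrib k L L ((φ ∘ₗ α) ⊗ₜ (ψ ∘ₗ β (α x))) (Δ y)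
          + TensorProduct.dualDistrib k L L ((ψ ∘ₗ α) ⊗ₜ (φ ∘ₗ β (α y))) (Δ x)
          - TensorProduct.dualDistrib k L L ((ψ ∘ₗ α) ⊗ₜ (φ ∘ₗ β (α x))) (Δ y) := by
      rw [map_sub, LinearMap.sub_apply, d2_adT2_dual, d2_adT2_dual,
        hF1ψ, hF2ψ, hF1φ, hF2φ, TensorProduct.tmul_neg, TensorProduct.tmul_neg,
        map_neg (TensorProduct.dualDistrib k L L), map_neg (TensorProduct.dualDistrib k L L)]
      simp only [LinearMap.neg_apply, dualMap_eq]
      ring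
    rw [d2_dualCobr, dualBr_apply', hL, hR]
    have hs1 := d2_swap_delta hca (ψ ∘ₗ α) (φ ∘ₗ β (α y)) x
    have hs2 := d2_swap_delta hca (ψ ∘ₗ α) (φ ∘ₗ β (α x)) y
    linear_combination hs2 - hs1
end

section
/- Let (L,[-,-],α) be a Hom-Lie algebra and r ∈ L⊗L with (α⊗α)(r) = r. Then the map Δ = ad(r), given by Δ(x) = Σ [x,r₁]⊗α(r₂) + α(r₁)⊗[x,r₂], satisfies the Hom-Lie bialgebra compatibility condition: Δ([x,y]) = ad_{α(x)}(Δ(y)) − ad_{α(y)}(Δ(x)) for all x,y ∈ L. -/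
open TensorProduct

variable {k : Type*} [Field k]
variable {L : Type*} [AddCommGroup L] [Module k L]

lemma keyMap {k : Type*} [Field k] {L : Type*} [AddCommGroup L] [Module k L]
    (β : L →ₗ[k] L →ₗ[k] L) (α : L →ₗ[k] L) (h : IsHomLie β α) (x y : L) :
    adT2 β α (α x) ∘ₗ adT2 β α y - adT2 β α (α y) ∘ₗ adT2 β α x =
      adT2 β α (β x y) ∘ₗ TensorProduct.map α α := by
  obtain ⟨hanti, hmul, hjac⟩ := h
  have key1 : ∀ a : L, β (α x) (β y a) - β (α y) (β x a) = β (β x y) (α a) := by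
    intro a
    have j := hjac x y a
    rw [show β a x = - β x a from hanti a x, map_neg, LinearMap.neg_apply] at j
    rw [show β (α x) (β y a) = - β (β y a) (α x) from hanti _ _,
        show β (α y) (β x a) = - β (β x a) (α y) from hanti _ _]
    linear_combination (norm := abel) -j
  apply TensorProduct.ext'
  intro a b
  simp only [LinearMap.sub_apply, LinearMap.comp_apply, adT2, LinearMap.add_apply,
    TensorProduct.map_tmul, map_add]
  rw [show β (α x) (α b) = α (β x b) from (hmul x b).symm,
      show β (α y) (α b) = α (β y b) from (hmul y b).symm,
      show β (α x) (α a) = α (β x a) from (hmul x a).symm,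
      show β (α y) (α a) = α (β y a) from (hmul y a).symm,
      show β (α x) (β y a) = β (β x y) (α a) + β (α y) (β x a) by
        rw [← key1 a]; abel,
      show β (α x) (β y b) = β (β x y) (α b) + β (α y) (β x b) by
        rw [← key1 b]; abel]
  simp only [TensorProduct.add_tmul, TensorProduct.tmul_add]
  abel

/-- for a Hom-Lie algebra and `r` fixed by `α⊗α`, the map
`Δ = ad(r)` satisfies the Hom-Lie bialgebra compatibility condition. -/
theorem stmt13 {k : Type*} [Field k] [CharZero k] {L : Type*} [AddCommGroup L] [Module k L]
    (β : L →ₗ[k] L →ₗ[k] L) (α : L →ₗ[k] L) (h : IsHomLie β α)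
    (r : L ⊗[k] L) (hr : TensorProduct.map α α r = r) :
    ∀ x y : L,
      adr β α r (β x y) =
        adT2 β α (α x) (adr β α r y) - adT2 β α (α y) (adr β α r x) := by
  intro x y
  have hm := congrArg (fun f : L ⊗[k] L →ₗ[k] L ⊗[k] L => f r) (keyMap β α h x y)
  simp only [LinearMap.sub_apply, LinearMap.comp_apply, hr] at hm
  show adT2 β α (β x y) r = _
  rw [← hm]; rfl
end

section
/- Let (L,[-,-],α) be a Hom-Lie algebra and r ∈ L⊗L such that (α⊗α)(r) = r, τ(r) = −r, and (α⊗α⊗α)(ad_x([[r,r]]^α)) = 0 for all x ∈ L. Then (L, [-,-], Δ = ad(r), α, r) is a coboundary Hom-Lie bialgebra; in particular Δ = ad(r) is antisymmetric, commutes with α, satisfies the Hom-co-Jacobi identity, and satisfies the compatibility condition with the bracket. -/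
open TensorProduct

variable {k : Type*} [Field k]
variable {L : Type*} [AddCommGroup L] [Module k L]

-- ===== auxiliary lemmas =====

lemma hlJac (β : L →ₗ[k] L →ₗ[k] L) (α : L →ₗ[k] L) (h : IsHomLie β α) (u v w : L) :
    β (β u v) (α w) = β (α u) (β v w) - β (α v) (β u w) := by
  have j := h.2.2 u v w
  have e1 : β (β w u) (α v) = β (α v) (β u w) := by
    rw [h.1 (β w u) (α v), h.1 w u, map_neg]; simp
  have e2 : β (β v w) (α u) = - β (α u) (β v w) := h.1 (β v w) (α u)
  rw [e1, e2] at j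
  linear_combination (norm := abel) j

lemma adr_apply (β : L →ₗ[k] L →ₗ[k] L) (α : L →ₗ[k] L) (r : L ⊗[k] L) (x : L) :
    adr β α r x = adT2 β α x r := rfl

/-- `adT2` intertwines `α ⊗ α`. -/
lemma adT2_alpha (β : L →ₗ[k] L →ₗ[k] L) (α : L →ₗ[k] L) (h : IsHomLie β α) (x : L) :
    adT2 β α (α x) ∘ₗ TensorProduct.map α α = TensorProduct.map α α ∘ₗ adT2 β α x := by
  apply TensorProduct.ext'
  intro a b
  simp [adT2, ← h.2.1]

/-- `adT2` commutes with the twist. -/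
lemma adT2_comm (β : L →ₗ[k] L →ₗ[k] L) (α : L →ₗ[k] L) (x : L) :
    (TensorProduct.comm k L L).toLinearMap ∘ₗ adT2 β α x =
      adT2 β α x ∘ₗ (TensorProduct.comm k L L).toLinearMap := by
  apply TensorProduct.ext'
  intro a b
  simp [adT2]
  abel

/-- compatibility, universal form. -/
lemma compat_aux (β : L →ₗ[k] L →ₗ[k] L) (α : L →ₗ[k] L) (h : IsHomLie β α) (x y : L) :
    adT2 β α (β x y) ∘ₗ TensorProduct.map α α =
      adT2 β α (α x) ∘ₗ adT2 β α y - adT2 β α (α y) ∘ₗ adT2 β α x := by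
  apply TensorProduct.ext'
  intro a b
  simp only [adT2, LinearMap.comp_apply, LinearMap.add_apply, LinearMap.sub_apply,
    TensorProduct.map_tmul, map_add]
  rw [hlJac β α h x y a, hlJac β α h x y b]
  simp only [← h.2.1, map_sub, LinearMap.sub_apply, TensorProduct.sub_tmul,
    TensorProduct.tmul_sub]
  abel

/-- expansion of `α ⊗ Δ`. -/
lemma expand_aux (β : L →ₗ[k] L →ₗ[k] L) (α : L →ₗ[k] L) (s : L ⊗[k] L) (u : L ⊗[k] L) :
    TensorProduct.map α (adr β α s) u = (c1223 β α + c1323 β α) (u ⊗ₜ s) := by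
  induction u using TensorProduct.induction_on with
  | zero => simp
  | tmul a b =>
    induction s using TensorProduct.induction_on with
    | zero => simp [adr_apply, adT2]
    | tmul c d => simp [adr_apply, adT2, c1223, c1323, TensorProduct.tmul_add]
    | add s1 s2 h1 h2 =>
      simp only [TensorProduct.map_tmul, LinearMap.add_apply] at h1 h2 ⊢
      have e : (adr β α (s1 + s2)) b = (adr β α s1) b + (adr β α s2) b := by
        simp [adr_apply, adT2]; abel
      rw [e, TensorProduct.tmul_add, h1, h2, TensorProduct.tmul_add]
      simp only [map_add]
      abel
  | add u1 u2 h1 h2 =>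
    simp only [map_add, TensorProduct.add_tmul, h1, h2, LinearMap.add_apply]
    try abel

noncomputable def sA (α : L →ₗ[k] L) :
    (L ⊗[k] L) ⊗[k] (L ⊗[k] L) →ₗ[k] (L ⊗[k] L) ⊗[k] (L ⊗[k] L) :=
  TensorProduct.map (TensorProduct.map α α) LinearMap.id

noncomputable def sB (α : L →ₗ[k] L) :
    (L ⊗[k] L) ⊗[k] (L ⊗[k] L) →ₗ[k] (L ⊗[k] L) ⊗[k] (L ⊗[k] L) :=
  TensorProduct.map LinearMap.id (TensorProduct.map α α)

noncomputable def sC (k L : Type*) [Field k] [AddCommGroup L] [Module k L] :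
    (L ⊗[k] L) ⊗[k] (L ⊗[k] L) →ₗ[k] (L ⊗[k] L) ⊗[k] (L ⊗[k] L) :=
  TensorProduct.map (TensorProduct.comm k L L).toLinearMap LinearMap.id

noncomputable def sD (k L : Type*) [Field k] [AddCommGroup L] [Module k L] :
    (L ⊗[k] L) ⊗[k] (L ⊗[k] L) →ₗ[k] (L ⊗[k] L) ⊗[k] (L ⊗[k] L) :=
  TensorProduct.map LinearMap.id (TensorProduct.comm k L L).toLinearMap

noncomputable def sE (k L : Type*) [Field k] [AddCommGroup L] [Module k L] :
    (L ⊗[k] L) ⊗[k] (L ⊗[k] L) →ₗ[k] (L ⊗[k] L) ⊗[k] (L ⊗[k] L) :=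
  (TensorProduct.comm k (L ⊗[k] L) (L ⊗[k] L)).toLinearMap

noncomputable def th1 (β : L →ₗ[k] L →ₗ[k] L) (α : L →ₗ[k] L) (x : L) :
    (L ⊗[k] L) ⊗[k] (L ⊗[k] L) →ₗ[k] L ⊗[k] (L ⊗[k] L) :=
  c1223 β α ∘ₗ TensorProduct.map (adT2 β α x) LinearMap.id

noncomputable def th2 (β : L →ₗ[k] L →ₗ[k] L) (α : L →ₗ[k] L) (x : L) :
    (L ⊗[k] L) ⊗[k] (L ⊗[k] L) →ₗ[k] L ⊗[k] (L ⊗[k] L) :=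
  c1323 β α ∘ₗ TensorProduct.map (adT2 β α x) LinearMap.id

/-- The master identity behind the Hom-co-Jacobi computation. -/
lemma master (β : L →ₗ[k] L →ₗ[k] L) (α : L →ₗ[k] L) (h : IsHomLie β α) (x : L) :
    (th1 β α x + th2 β α x) ∘ₗ (sA α ∘ₗ sB α ∘ₗ sB α)
      + (cyc ∘ₗ th2 β α x) ∘ₗ (sC k L ∘ₗ sD k L ∘ₗ sA α ∘ₗ sB α ∘ₗ sB α)
      - (cyc ∘ₗ th1 β α x) ∘ₗ (sE k L ∘ₗ sC k L ∘ₗ sA α ∘ₗ sA α ∘ₗ sB α)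
      - (cyc ∘ₗ (cyc ∘ₗ (th1 β α x + th2 β α x))) ∘ₗ (sE k L ∘ₗ sD k L ∘ₗ sA α ∘ₗ sA α ∘ₗ sB α)
      = TensorProduct.map α (TensorProduct.map α α) ∘ₗ adT3 β α x ∘ₗ
          (c1213 β α + c1223 β α + c1323 β α) := by
  apply TensorProduct.ext_fourfold'
  intro a b c d
  simp only [th1, th2, sA, sB, sC, sD, sE, c1213, c1223, c1323, adT2, adT3, cyc,
    LinearMap.comp_apply, LinearMap.add_apply, LinearMap.sub_apply,
    TensorProduct.map_tmul, LinearMap.id_apply, LinearEquiv.coe_coe,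
    TensorProduct.comm_tmul, TensorProduct.assoc_tmul, TensorProduct.assoc_symm_tmul,
    TensorProduct.tensorTensorTensorComm_tmul, TensorProduct.lift.tmul,
    TensorProduct.tmul_add, TensorProduct.add_tmul, map_add]
  simp only [h.2.1]
  simp only [hlJac β α h]
  have hK : ∀ v w : L, β (α (α w)) (β x (α v)) =
      β (α (α v)) (β x (α w)) - β (α x) (β (α v) (α w)) := by
    intro v w
    have h1 := hlJac β α h x (α v) (α w)
    rw [h.1 (β x (α v)) (α (α w))] at h1
    linear_combination (norm := abel) -h1
  rw [hK d b, hK c a, hK c b,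
      h.1 (α (α d)) (α (α b)), h.1 (α (α c)) (α (α a)), h.1 (α (α c)) (α (α b)),
      h.1 (α d) (α b), h.1 (α c) (α a), h.1 (α c) (α b)]
  simp only [map_sub, map_neg, LinearMap.sub_apply, LinearMap.neg_apply,
    TensorProduct.tmul_sub, TensorProduct.sub_tmul, TensorProduct.tmul_neg,
    TensorProduct.neg_tmul, TensorProduct.tmul_add, TensorProduct.add_tmul,
    map_add, LinearMap.add_apply]
  abel

/-- sufficient conditions for `(L, [-,-], ad(r), α, r)` to be a
coboundary Hom-Lie bialgebra. -/
theorem stmt14 {k : Type*} [Field k] [CharZero k] {L : Type*} [AddCommGroup L] [Module k L]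
    (β : L →ₗ[k] L →ₗ[k] L) (α : L →ₗ[k] L) (h : IsHomLie β α)
    (r : L ⊗[k] L) (hr : TensorProduct.map α α r = r)
    (hanti : TensorProduct.comm k L L r = - r)
    (hcob : ∀ x : L,
      TensorProduct.map α (TensorProduct.map α α) (adT3 β α x (chybe β α r r)) = 0) :
    IsHomLieBialg β (adr β α r) α := by
  refine ⟨h, ⟨?_, ?_, ?_⟩, ?_⟩
  · -- Δ ∘ α = (α⊗α) ∘ Δ
    intro x
    have := LinearMap.congr_fun (adT2_alpha β α h x) r
    simp only [LinearMap.comp_apply, hr] at this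
    simpa [adr_apply] using this
  · -- antisymmetry
    intro x
    have := LinearMap.congr_fun (adT2_comm β α x) r
    simp only [LinearMap.comp_apply, LinearEquiv.coe_coe, hanti, map_neg] at this
    simpa [adr_apply] using this
  · -- co-Jacobi identity
    intro x
    have eA : sA α (r ⊗ₜ r) = r ⊗ₜ r := by simp [sA, hr]
    have eB : sB α (r ⊗ₜ r) = r ⊗ₜ r := by simp [sB, hr]
    have eC : sC k L (r ⊗ₜ r) = - (r ⊗ₜ r) := by
      simp [sC, hanti, TensorProduct.neg_tmul]
    have eD : sD k L (r ⊗ₜ r) = - (r ⊗ₜ r) := by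
      simp [sD, hanti, TensorProduct.tmul_neg]
    have eE : sE k L (r ⊗ₜ r) = r ⊗ₜ r := by simp [sE]
    have key := LinearMap.congr_fun (master β α h x) (r ⊗ₜ[k] r)
    simp only [LinearMap.comp_apply, LinearMap.add_apply, LinearMap.sub_apply,
      eA, eB, eC, eD, eE, map_neg, neg_neg, sub_neg_eq_add] at key
    have hch : (c1213 β α) (r ⊗ₜ[k] r) + (c1223 β α) (r ⊗ₜ[k] r) + (c1323 β α) (r ⊗ₜ[k] r)
        = chybe β α r r := rfl
    rw [hch] at key
    have hth : th1 β α x (r ⊗ₜ[k] r) + th2 β α x (r ⊗ₜ[k] r)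
        = TensorProduct.map α (adr β α r) (adr β α r x) := by
      rw [expand_aux β α r (adr β α r x)]
      simp [th1, th2, adr_apply]
    have h0 := hcob x
    rw [← key] at h0
    rw [← hth, cycSum]
    simp only [LinearMap.add_apply, LinearMap.comp_apply, LinearMap.id_apply, map_add] at h0 ⊢
    linear_combination (norm := abel) h0
  · -- compatibility
    intro x y
    have := LinearMap.congr_fun (compat_aux β α h x y) r
    simp only [LinearMap.comp_apply, LinearMap.sub_apply, hr] at this
    simpa [adr_apply] using this
end

section
/- Let (L,[-,-],Δ,r) be a coboundary Lie bialgebra and α : L → L a Lie algebra morphism with (α⊗α)(r) = r. Then L_α = (L, α∘[-,-], Δ∘α, α, r) is a coboundary Hom-Lie bialgebra; if moreover L is quasi-triangular (r satisfies the CYBE), then L_α is a quasi-triangular Hom-Lie bialgebra. -/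
open TensorProduct

variable {k : Type*} [Field k]
variable {L : Type*} [AddCommGroup L] [Module k L]

/-- twisting a coboundary (resp. quasi-triangular) Lie bialgebra by a
Lie algebra endomorphism fixing `r` gives a coboundary (resp. quasi-triangular)
Hom-Lie bialgebra. -/
theorem stmt16 {k : Type*} [Field k] [CharZero k] {L : Type*} [AddCommGroup L] [Module k L]
    (β : L →ₗ[k] L →ₗ[k] L) (Δ : L →ₗ[k] L ⊗[k] L) (r : L ⊗[k] L)
    (hLie : IsHomLieBialg β Δ (LinearMap.id : L →ₗ[k] L))
    (hΔ : ∀ x, Δ x = adT2 β (LinearMap.id : L →ₗ[k] L) x r)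
    (α : L →ₗ[k] L)
    (hbr : ∀ x y, α (β x y) = β (α x) (α y))
    (hr : TensorProduct.map α α r = r) :
    (IsHomLieBialg (LinearMap.compr₂ β α) (Δ ∘ₗ α) α ∧
      (∀ x, (Δ ∘ₗ α) x = adT2 (LinearMap.compr₂ β α) α x r)) ∧
    (chybe β (LinearMap.id : L →ₗ[k] L) r r = 0 →
      chybe (LinearMap.compr₂ β α) α r r = 0) := by
  obtain ⟨⟨hanti, _hmul, hjac⟩, ⟨_hcoα, hcoanti, hcojac⟩, hcompat⟩ := hLie
  have hA : ∀ (x : L) (t : L ⊗[k] L),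
      TensorProduct.map α α (adT2 β (LinearMap.id : L →ₗ[k] L) x t) =
        adT2 β (LinearMap.id : L →ₗ[k] L) (α x) (TensorProduct.map α α t) := by
    intro x t
    induction t using TensorProduct.induction_on with
    | zero => simp
    | tmul a b => simp [adT2, hbr]
    | add u v hu hv => simp only [map_add, hu, hv]
  have hB : ∀ (x : L) (t : L ⊗[k] L),
      adT2 (LinearMap.compr₂ β α) α x t =
        TensorProduct.map α α (adT2 β (LinearMap.id : L →ₗ[k] L) x t) := by
    intro x t
    induction t using TensorProduct.induction_on with
    | zero => simp
    | tmul a b => simp [adT2]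
    | add u v hu hv => simp only [map_add, hu, hv]
  have hΔα : ∀ x, Δ (α x) = TensorProduct.map α α (Δ x) := by
    intro x
    rw [hΔ, hΔ, hA, hr]
  have h1 : ∀ x y, Δ (β x y) = adT2 β (LinearMap.id : L →ₗ[k] L) x (Δ y)
      - adT2 β (LinearMap.id : L →ₗ[k] L) y (Δ x) := by
    intro x y; simpa using hcompat x y
  refine ⟨⟨⟨⟨?_, ?_, ?_⟩, ⟨?_, ?_, ?_⟩, ?_⟩, ?_⟩, ?_⟩
  · intro x y
    simp [LinearMap.compr₂_apply, hanti x y]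
  · intro x y
    simp [LinearMap.compr₂_apply, hbr]
  · intro x y z
    have hz : β (β x y) z + β (β z x) y + β (β y z) x = 0 := by simpa using hjac x y z
    simp only [LinearMap.compr₂_apply, ← hbr, ← map_add, hz, map_zero]
  · intro x
    simp [hΔα]
  · intro x
    simpa using hcoanti (α x)
  · intro x
    have hcyc : (cyc ∘ₗ TensorProduct.map α (TensorProduct.map α α) :
        L ⊗[k] (L ⊗[k] L) →ₗ[k] L ⊗[k] (L ⊗[k] L)) =
        TensorProduct.map α (TensorProduct.map α α) ∘ₗ cyc := by
      ext a b c
      simp [cyc]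
    have hcyc' : ∀ t : L ⊗[k] (L ⊗[k] L),
        cyc (TensorProduct.map α (TensorProduct.map α α) t) =
          TensorProduct.map α (TensorProduct.map α α) (cyc t) :=
      fun t => LinearMap.congr_fun hcyc t
    have hcycSum : ∀ t : L ⊗[k] (L ⊗[k] L),
        cycSum (TensorProduct.map α (TensorProduct.map α α) t) =
          TensorProduct.map α (TensorProduct.map α α) (cycSum t) := by
      intro t
      simp [cycSum, hcyc', map_add]
    have hswap : ∀ t : L ⊗[k] L,
        TensorProduct.map α (Δ ∘ₗ α) t =
          TensorProduct.map α (TensorProduct.map α α)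
            (TensorProduct.map (LinearMap.id : L →ₗ[k] L) Δ t) := by
      intro t
      induction t using TensorProduct.induction_on with
      | zero => simp
      | tmul a b => simp [hΔα]
      | add u v hu hv => simp only [map_add, hu, hv]
    rw [LinearMap.comp_apply, hswap, hcycSum, hcojac (α x), map_zero]
  · intro x y
    simp only [LinearMap.comp_apply, LinearMap.compr₂_apply, hΔα, h1, hB, ← hA, map_sub]
  · intro x
    simp only [LinearMap.comp_apply, hΔα, hΔ, hB]
  · intro h
    have e1 : c1213 (LinearMap.compr₂ β α) α =
        TensorProduct.map α (TensorProduct.map α α) ∘ₗ c1213 β (LinearMap.id : L →ₗ[k] L) := by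
      ext a b c d
      simp [c1213]
    have e2 : c1223 (LinearMap.compr₂ β α) α =
        TensorProduct.map α (TensorProduct.map α α) ∘ₗ c1223 β (LinearMap.id : L →ₗ[k] L) := by
      ext a b c d
      simp [c1223]
    have e3 : c1323 (LinearMap.compr₂ β α) α =
        TensorProduct.map α (TensorProduct.map α α) ∘ₗ c1323 β (LinearMap.id : L →ₗ[k] L) := by
      ext a b c d
      simp [c1323]
    have : chybe (LinearMap.compr₂ β α) α r r =
        TensorProduct.map α (TensorProduct.map α α) (chybe β (LinearMap.id : L →ₗ[k] L) r r) := by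
      simp only [chybe, e1, e2, e3, LinearMap.comp_apply, map_add]
    rw [this, h, map_zero]
end

section
/- Let (L,[-,-],Δ,α,r) be a coboundary Hom-Lie bialgebra. Then (α⊗Δ)(r) = [r₁₂,r₂₃] + [r₁₃,r₂₃] and (Δ⊗α)(r) = −[r₁₂,r₁₃] − [r₁₂,r₂₃]. Consequently, r satisfies the CHYBE [[r,r]]^α = 0 if and only if (α⊗Δ)(r) = −[r₁₂,r₁₃], if and only if (Δ⊗α)(r) = [r₁₃,r₂₃]. -/
open TensorProduct

variable {k : Type*} [Field k]
variable {L : Type*} [AddCommGroup L] [Module k L]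

lemma aux1 (β : L →ₗ[k] L →ₗ[k] L) (α : L →ₗ[k] L) (s t : L ⊗[k] L) :
    TensorProduct.map α (adr β α t) s = c1223 β α (s ⊗ₜ t) + c1323 β α (s ⊗ₜ t) := by
  induction s using TensorProduct.induction_on with
  | zero => simp [TensorProduct.zero_tmul]
  | add x y hx hy =>
      simp only [map_add, TensorProduct.add_tmul, hx, hy]; abel
  | tmul a b =>
      induction t using TensorProduct.induction_on with
      | zero => simp [TensorProduct.tmul_zero, adr, adT2]
      | add x y hx hy =>
          have h1 : adr β α (x + y) = adr β α x + adr β α y := by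
            ext z; simp only [adr, adT2, LinearMap.coe_mk, AddHom.coe_mk,
              LinearMap.add_apply, map_add]; try abel
          rw [h1, TensorProduct.tmul_add]
          simp only [map_add, TensorProduct.map_add_right, LinearMap.add_apply]
          rw [hx, hy]; try abel
      | tmul a' b' =>
          simp [c1223, c1323, adr, adT2, TensorProduct.tmul_add]

lemma aux2 (β : L →ₗ[k] L →ₗ[k] L) (α : L →ₗ[k] L)
    (hskew : ∀ x y, β x y = - β y x) (s t : L ⊗[k] L) :
    (TensorProduct.assoc k L L L) (TensorProduct.map (adr β α t) α s) =
      - c1213 β α (t ⊗ₜ s) - c1223 β α (t ⊗ₜ s) := by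
  induction s using TensorProduct.induction_on with
  | zero => simp [TensorProduct.tmul_zero]
  | add x y hx hy =>
      simp only [map_add, TensorProduct.tmul_add, hx, hy]; abel
  | tmul a b =>
      induction t using TensorProduct.induction_on with
      | zero => simp [TensorProduct.zero_tmul, adr, adT2]
      | add x y hx hy =>
          have h1 : adr β α (x + y) = adr β α x + adr β α y := by
            ext z; simp only [adr, adT2, LinearMap.coe_mk, AddHom.coe_mk,
              LinearMap.add_apply, map_add]; try abel
          rw [h1, TensorProduct.add_tmul]
          simp only [map_add, TensorProduct.map_add_left, LinearMap.add_apply]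
          rw [hx, hy]; try abel
      | tmul a' b' =>
          simp only [c1213, c1223, adr, adT2, LinearMap.coe_mk, AddHom.coe_mk,
            LinearMap.add_apply, TensorProduct.map_tmul, LinearMap.coe_comp,
            LinearEquiv.coe_coe, Function.comp_apply,
            TensorProduct.tensorTensorTensorComm_tmul, TensorProduct.assoc_tmul,
            TensorProduct.assoc_symm_tmul, TensorProduct.lift.tmul,
            TensorProduct.add_tmul]
          rw [hskew a' a, hskew b' a]
          simp only [map_neg, LinearMap.neg_apply, TensorProduct.neg_tmul,
            TensorProduct.tmul_neg, neg_neg]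
          abel

/-- in a coboundary Hom-Lie bialgebra,
`(α⊗Δ)(r) = [r₁₂,r₂₃] + [r₁₃,r₂₃]` and `(Δ⊗α)(r) = −[r₁₂,r₁₃] − [r₁₂,r₂₃]`;
consequently the CHYBE holds iff `(α⊗Δ)(r) = −[r₁₂,r₁₃]`, iff
`(Δ⊗α)(r) = [r₁₃,r₂₃]`. -/
theorem stmt17 {k : Type*} [Field k] [CharZero k] {L : Type*} [AddCommGroup L] [Module k L]
    (β : L →ₗ[k] L →ₗ[k] L) (Δ : L →ₗ[k] L ⊗[k] L) (α : L →ₗ[k] L) (r : L ⊗[k] L)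
    (hbi : IsHomLieBialg β Δ α)
    (hr : TensorProduct.map α α r = r)
    (hΔ : ∀ x, Δ x = adT2 β α x r) :
    (TensorProduct.map α Δ r = c1223 β α (r ⊗ₜ r) + c1323 β α (r ⊗ₜ r)) ∧
    ((TensorProduct.assoc k L L L) (TensorProduct.map Δ α r) =
      - c1213 β α (r ⊗ₜ r) - c1223 β α (r ⊗ₜ r)) ∧
    (chybe β α r r = 0 ↔ TensorProduct.map α Δ r = - c1213 β α (r ⊗ₜ r)) ∧
    (chybe β α r r = 0 ↔
      (TensorProduct.assoc k L L L) (TensorProduct.map Δ α r) = c1323 β α (r ⊗ₜ r)) := by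
  have hskew : ∀ x y, β x y = - β y x := hbi.1.1
  have hΔ' : Δ = adr β α r := by
    ext x; exact hΔ x
  have h1 : TensorProduct.map α Δ r = c1223 β α (r ⊗ₜ r) + c1323 β α (r ⊗ₜ r) := by
    rw [hΔ']; exact aux1 β α r r
  have h2 : (TensorProduct.assoc k L L L) (TensorProduct.map Δ α r) =
      - c1213 β α (r ⊗ₜ r) - c1223 β α (r ⊗ₜ r) := by
    rw [hΔ']; exact aux2 β α hskew r r
  have hch1 : chybe β α r r = c1213 β α (r ⊗ₜ r) + TensorProduct.map α Δ r := by
    unfold chybe; rw [add_assoc, ← h1]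
  have hsum : c1213 β α (r ⊗ₜ r) + c1223 β α (r ⊗ₜ r) =
      -((TensorProduct.assoc k L L L) (TensorProduct.map Δ α r)) := by
    rw [h2]; abel
  have hch2 : chybe β α r r =
      c1323 β α (r ⊗ₜ r) - (TensorProduct.assoc k L L L) (TensorProduct.map Δ α r) := by
    unfold chybe; rw [hsum]; abel
  refine ⟨h1, h2, ?_, ?_⟩
  · rw [hch1, add_comm]
    exact (eq_neg_iff_add_eq_zero).symm
  · rw [hch2, sub_eq_zero]
    exact eq_comm
end
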